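/- arXiv:2110.13568 — 9 statements merged into one kernel-verified Lean document; each statement's English description precedes it below -/
import Mathlib

section
/- Let |v⟩ be a unit vector in C^m ⊗ C^n. There exists a unitary matrix U ∈ M_m such that (U ⊗ I_n)|v⟩ is entrywise real and non-negative if and only if the reduced matrix Tr_1(|v⟩⟨v|) is a completely positive matrix whose CP-rank is at most m. -/
open Matrix BigOperators
open scoped ComplexOrder

namespace CPCPPaper

/-- A matrix is a *completely positive (CP) matrix* if it is a finite sum of outer products
`x xᵀ` of entrywise non-negative vectors. Here `0 ≤ z` in `ℂ` means that `z` is real and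
non-negative. -/
def IsCPMatrix {ι : Type*} [Fintype ι] (X : Matrix ι ι ℂ) : Prop :=
  ∃ (k : ℕ) (v : Fin k → ι → ℂ),
    (∀ j i, 0 ≤ v j i) ∧ X = ∑ j, Matrix.vecMulVec (v j) (v j)

/-- The CP-rank of a matrix: the minimal number of terms in a decomposition as a sum of
outer products of entrywise non-negative vectors. -/
noncomputable def cpRank {ι : Type*} [Fintype ι] (X : Matrix ι ι ℂ) : ℕ :=
  sInf {k : ℕ | ∃ v : Fin k → ι → ℂ,
    (∀ j i, 0 ≤ v j i) ∧ X = ∑ j, Matrix.vecMulVec (v j) (v j)}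

/-- A matrix is *doubly non-negative (DNN)* if it is positive semidefinite and all of its
entries are real and non-negative. -/
def IsDNNMatrix {ι : Type*} [Fintype ι] (X : Matrix ι ι ℂ) : Prop :=
  X.PosSemidef ∧ ∀ i j, 0 ≤ X i j

/-- The blockwise extension `I_k ⊗ Φ` of a map `Φ : M_n → M_m`. -/
def tensorExt {n m : ℕ} (k : ℕ)
    (Φ : Matrix (Fin n) (Fin n) ℂ → Matrix (Fin m) (Fin m) ℂ)
    (X : Matrix (Fin k × Fin n) (Fin k × Fin n) ℂ) :
    Matrix (Fin k × Fin m) (Fin k × Fin m) ℂ :=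
  Matrix.of fun p q => Φ (Matrix.of fun i j => X (p.1, i) (q.1, j)) p.2 q.2

/-- `Φ` is *completely positive completely positive (CPCP)* if `I_k ⊗ Φ` sends CP matrices
to CP matrices for every `k`. -/
def IsCPCP {n m : ℕ} (Φ : Matrix (Fin n) (Fin n) ℂ → Matrix (Fin m) (Fin m) ℂ) : Prop :=
  ∀ (k : ℕ) (X : Matrix (Fin k × Fin n) (Fin k × Fin n) ℂ),
    IsCPMatrix X → IsCPMatrix (tensorExt k Φ X)

/-- `Φ` is *completely positive doubly non-negative (CPDNN)* if `I_k ⊗ Φ` sends DNN matrices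
to DNN matrices for every `k`. -/
def IsCPDNN {n m : ℕ} (Φ : Matrix (Fin n) (Fin n) ℂ → Matrix (Fin m) (Fin m) ℂ) : Prop :=
  ∀ (k : ℕ) (X : Matrix (Fin k × Fin n) (Fin k × Fin n) ℂ),
    IsDNNMatrix X → IsDNNMatrix (tensorExt k Φ X)

/-- `Φ` is a *completely positive map* (in the superoperator sense) if `I_k ⊗ Φ` sends
positive semidefinite matrices to positive semidefinite matrices for every `k`. -/
def IsCPMap {n m : ℕ} (Φ : Matrix (Fin n) (Fin n) ℂ → Matrix (Fin m) (Fin m) ℂ) : Prop :=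
  ∀ (k : ℕ) (X : Matrix (Fin k × Fin n) (Fin k × Fin n) ℂ),
    X.PosSemidef → (tensorExt k Φ X).PosSemidef

/-- `Φ` is trace-preserving. -/
def IsTracePreserving {n m : ℕ}
    (Φ : Matrix (Fin n) (Fin n) ℂ → Matrix (Fin m) (Fin m) ℂ) : Prop :=
  ∀ X, (Φ X).trace = X.trace

/-- The Choi matrix `J(Φ) = ∑ᵢⱼ |i⟩⟨j| ⊗ Φ(|i⟩⟨j|)`. -/
def choiMatrix {n m : ℕ}
    (Φ : Matrix (Fin n) (Fin n) ℂ → Matrix (Fin m) (Fin m) ℂ) :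
    Matrix (Fin n × Fin m) (Fin n × Fin m) ℂ :=
  Matrix.of fun p q => Φ (Matrix.single p.1 q.1 1) p.2 q.2

/-- A *CP state*: a completely positive matrix with trace one. -/
def IsCPState {n : ℕ} (ρ : Matrix (Fin n) (Fin n) ℂ) : Prop :=
  IsCPMatrix ρ ∧ ρ.trace = 1

/-- `Φ` is *CP-preserving* if it maps CP states to CP states. -/
def IsCPPreserving {n m : ℕ}
    (Φ : Matrix (Fin n) (Fin n) ℂ → Matrix (Fin m) (Fin m) ℂ) : Prop :=
  ∀ ρ, IsCPState ρ → IsCPState (Φ ρ)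

/-- The Pauli matrix `X`. -/
def PauliX : Matrix (Fin 2) (Fin 2) ℂ := !![0, 1; 1, 0]

/-- The Pauli matrix `Y`. -/
def PauliY : Matrix (Fin 2) (Fin 2) ℂ := !![0, -Complex.I; Complex.I, 0]

/-- The Pauli matrix `Z`. -/
def PauliZ : Matrix (Fin 2) (Fin 2) ℂ := !![1, 0; 0, -1]

/-- The permutation matrix associated to a permutation. -/
def permMat {n : ℕ} (σ : Equiv.Perm (Fin n)) : Matrix (Fin n) (Fin n) ℂ :=
  Matrix.of fun i j => if i = σ j then 1 else 0


lemma star_of_nonneg {z : ℂ} (h : 0 ≤ z) : star z = z := by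
  rw [Complex.le_def] at h
  rw [Complex.star_def]
  exact Complex.conj_eq_iff_im.mpr h.2.symm

open scoped InnerProductSpace in
lemma exists_isometry_of_gram {m n : ℕ} (f g : Fin n → EuclideanSpace ℂ (Fin m))
    (h : ∀ i j, (inner ℂ (f i) (f j) : ℂ) = inner ℂ (g i) (g j)) :
    ∃ L : EuclideanSpace ℂ (Fin m) →ₗᵢ[ℂ] EuclideanSpace ℂ (Fin m), ∀ i, L (f i) = g i := by
  classical
  let φ : (Fin n → ℂ) →ₗ[ℂ] EuclideanSpace ℂ (Fin m) :=
    { toFun := fun c => ∑ i, c i • f i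
      map_add' := fun c d => by simp [add_smul, Finset.sum_add_distrib]
      map_smul' := fun r c => by simp [Finset.smul_sum, smul_smul] }
  let ψ : (Fin n → ℂ) →ₗ[ℂ] EuclideanSpace ℂ (Fin m) :=
    { toFun := fun c => ∑ i, c i • g i
      map_add' := fun c d => by simp [add_smul, Finset.sum_add_distrib]
      map_smul' := fun r c => by simp [Finset.smul_sum, smul_smul] }
  have hφ : ∀ c, φ c = ∑ i, c i • f i := fun c => rfl
  have hψ : ∀ c, ψ c = ∑ i, c i • g i := fun c => rfl
  have hφψ : ∀ c d : Fin n → ℂ, (inner ℂ (φ c) (φ d) : ℂ) = inner ℂ (ψ c) (ψ d) := by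
    intro c d
    rw [hφ, hφ, hψ, hψ, sum_inner, sum_inner]
    refine Finset.sum_congr rfl fun i _ => ?_
    rw [inner_sum, inner_sum]
    refine Finset.sum_congr rfl fun j _ => ?_
    rw [inner_smul_left, inner_smul_left, inner_smul_right, inner_smul_right, h]
  have hnorm : ∀ c, ‖φ c‖ = ‖ψ c‖ := by
    intro c
    rw [@norm_eq_sqrt_re_inner ℂ, @norm_eq_sqrt_re_inner ℂ, hφψ c c]
  have hker : LinearMap.ker φ ≤ LinearMap.ker ψ := by
    intro c hc
    rw [LinearMap.mem_ker] at hc ⊢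
    have : ‖ψ c‖ = 0 := by rw [← hnorm c, hc, norm_zero]
    exact norm_eq_zero.mp this
  let e := φ.quotKerEquivRange
  let ψq := Submodule.liftQ (LinearMap.ker φ) ψ hker
  let L0 : LinearMap.range φ →ₗ[ℂ] EuclideanSpace ℂ (Fin m) := ψq ∘ₗ e.symm.toLinearMap
  have key : ∀ (c : Fin n → ℂ) (hc : φ c ∈ LinearMap.range φ), L0 ⟨φ c, hc⟩ = ψ c := by
    intro c hc
    have h1 : e.symm ⟨φ c, hc⟩ = Submodule.Quotient.mk c := by
      rw [LinearEquiv.symm_apply_eq]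
      exact Subtype.ext (φ.quotKerEquivRange_apply_mk c).symm
    show ψq (e.symm ⟨φ c, hc⟩) = ψ c
    rw [h1]
    exact Submodule.liftQ_apply _ _ _
  have hL0norm : ∀ s : LinearMap.range φ, ‖L0 s‖ = ‖s‖ := by
    intro s
    obtain ⟨c, hc⟩ := s.2
    have hs : s = ⟨φ c, ⟨c, rfl⟩⟩ := Subtype.ext hc.symm
    rw [hs, key c ⟨c, rfl⟩]
    rw [← hnorm c]
    rfl
  let L : LinearMap.range φ →ₗᵢ[ℂ] EuclideanSpace ℂ (Fin m) := ⟨L0, hL0norm⟩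
  refine ⟨L.extend, fun i => ?_⟩
  have hfi : φ (Pi.single i 1) = f i := by
    rw [hφ]
    simp [Pi.single_apply, ite_smul]
  have hgi : ψ (Pi.single i 1) = g i := by
    rw [hψ]
    simp [Pi.single_apply, ite_smul]
  have hmem : f i ∈ LinearMap.range φ := ⟨Pi.single i 1, hfi⟩
  have : L.extend (f i) = L ⟨f i, hmem⟩ := L.extend_apply ⟨f i, hmem⟩
  rw [this]
  show L0 ⟨f i, hmem⟩ = g i
  have : (⟨f i, hmem⟩ : LinearMap.range φ) = ⟨φ (Pi.single i 1), LinearMap.mem_range_self φ (Pi.single i 1)⟩ :=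
    Subtype.ext hfi.symm
  rw [this, key, hgi]

/-- For a unit vector `v ∈ ℂ^m ⊗ ℂ^n`, there is a unitary `U ∈ M_m` with
`(U ⊗ I_n)|v⟩` entrywise real and non-negative iff the reduced matrix `Tr₁(|v⟩⟨v|)` is a
completely positive matrix of CP-rank at most `m`. -/
theorem statement_0 {m n : ℕ} (v : Fin m × Fin n → ℂ)
    (hv : ∑ p, Complex.normSq (v p) = 1)
    (T : Matrix (Fin n) (Fin n) ℂ)
    (hT : T = Matrix.of fun i j => ∑ a : Fin m, v (a, i) * star (v (a, j))) :
    (∃ U : Matrix (Fin m) (Fin m) ℂ, U * Uᴴ = 1 ∧ Uᴴ * U = 1 ∧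
      ∀ p : Fin m × Fin n, 0 ≤ ∑ c : Fin m, U p.1 c * v (c, p.2)) ↔
    (IsCPMatrix T ∧ cpRank T ≤ m) := by
  classical
  set M : Matrix (Fin m) (Fin n) ℂ := Matrix.of fun a i => v (a, i) with hM
  have hTM : T = Mᵀ * M.map (starRingEnd ℂ) := by
    rw [hT]
    ext i j
    simp [Matrix.mul_apply, hM, Matrix.map_apply, Complex.star_def]
  constructor
  · rintro ⟨U, hU1, hU2, hUv⟩
    set W : Matrix (Fin m) (Fin n) ℂ := U * M with hW
    have hWpos : ∀ a i, 0 ≤ W a i := by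
      intro a i
      have := hUv (a, i)
      simpa [hW, Matrix.mul_apply, hM] using this
    have hUU : Uᵀ * U.map (starRingEnd ℂ) = 1 := by
      have h2 : (Uᴴ * U)ᵀ = (1 : Matrix (Fin m) (Fin m) ℂ) := by
        rw [hU2, Matrix.transpose_one]
      rw [Matrix.transpose_mul] at h2
      have h3 : (Uᴴ)ᵀ = U.map (starRingEnd ℂ) := by
        ext a b
        simp [Matrix.conjTranspose_apply, Matrix.map_apply, Complex.star_def]
      rwa [← h3]
    have hTW : T = Wᵀ * W.map (starRingEnd ℂ) := by
      rw [hTM, hW, Matrix.transpose_mul, Matrix.map_mul, Matrix.mul_assoc,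
        ← Matrix.mul_assoc Uᵀ, hUU, Matrix.one_mul]
    refine ⟨⟨m, fun a => W a, fun a i => hWpos a i, ?_⟩, ?_⟩
    · ext i j
      rw [hTW]
      simp only [Matrix.sum_apply, Matrix.vecMulVec_apply, Matrix.mul_apply,
        Matrix.transpose_apply, Matrix.map_apply]
      refine Finset.sum_congr rfl fun a _ => ?_
      congr 1
      exact star_of_nonneg (hWpos a j)
    · apply Nat.sInf_le
      refine ⟨fun a => W a, fun a i => hWpos a i, ?_⟩
      ext i j
      rw [hTW]
      simp only [Matrix.sum_apply, Matrix.vecMulVec_apply, Matrix.mul_apply,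
        Matrix.transpose_apply, Matrix.map_apply]
      refine Finset.sum_congr rfl fun a _ => ?_
      congr 1
      exact star_of_nonneg (hWpos a j)
  · rintro ⟨hCP, hrank⟩
    -- get an optimal decomposition
    have hne : {k : ℕ | ∃ vv : Fin k → Fin n → ℂ,
        (∀ j i, 0 ≤ vv j i) ∧ T = ∑ j, Matrix.vecMulVec (vv j) (vv j)}.Nonempty := by
      obtain ⟨k, vv, h1, h2⟩ := hCP
      exact ⟨k, vv, h1, h2⟩
    have hmem := Nat.sInf_mem hne
    obtain ⟨vv, hvvpos, hvvdec⟩ := hmem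
    set k := cpRank T with hk
    -- pad to m vectors
    let w : Fin m → Fin n → ℂ := fun a => if h : (a : ℕ) < k then vv ⟨a, h⟩ else 0
    have hwpos : ∀ a i, 0 ≤ w a i := by
      intro a i
      by_cases h : (a : ℕ) < k
      · simp only [w, dif_pos h]; exact hvvpos _ i
      · simp [w, dif_neg h]
    have hwdec : T = ∑ a : Fin m, Matrix.vecMulVec (w a) (w a) := by
      have h1 : ∑ a ∈ Finset.univ.map (Fin.castLEEmb hrank),
          Matrix.vecMulVec (w a) (w a) = ∑ a : Fin m, Matrix.vecMulVec (w a) (w a) := by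
        refine Finset.sum_subset (Finset.subset_univ _) ?_
        intro a _ ha
        have hak : ¬ ((a : ℕ) < k) := by
          intro hlt
          apply ha
          rw [Finset.mem_map]
          exact ⟨⟨(a : ℕ), hlt⟩, Finset.mem_univ _, by
            simp [Fin.castLEEmb, Fin.castLE]⟩
        simp only [w, dif_neg hak]
        ext i j
        simp [Matrix.vecMulVec_apply]
      rw [hvvdec, ← h1, Finset.sum_map]
      refine Finset.sum_congr rfl fun j _ => ?_
      have hww : w (Fin.castLEEmb hrank j) = vv j := by
        have hlt : ((Fin.castLEEmb hrank j : Fin m) : ℕ) < k := by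
          exact j.isLt
        have hfin : (⟨((Fin.castLEEmb hrank j : Fin m) : ℕ), hlt⟩ : Fin k) = j :=
          Fin.ext (by simp [Fin.castLEEmb, Fin.castLE])
        simp only [w, dif_pos hlt, hfin]
        exact congrArg vv hfin
      rw [hww]
    -- entrywise formula for T from decomposition
    have hTw : ∀ i j, T i j = ∑ a : Fin m, w a i * w a j := by
      intro i j
      rw [hwdec]
      simp [Matrix.sum_apply, Matrix.vecMulVec_apply]
    -- build the isometry
    let f : Fin n → EuclideanSpace ℂ (Fin m) := fun i => WithLp.toLp 2 (fun a => v (a, i))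
    let g : Fin n → EuclideanSpace ℂ (Fin m) := fun i => WithLp.toLp 2 (fun a => w a i)
    have hgram : ∀ i j, (inner ℂ (f i) (f j) : ℂ) = inner ℂ (g i) (g j) := by
      intro i j
      have h1 : (inner ℂ (f i) (f j) : ℂ) = star (T i j) := by
        rw [hT]
        rw [PiLp.inner_apply]
        simp only [RCLike.inner_apply, Matrix.of_apply, star_sum, star_mul', star_star]
        exact Finset.sum_congr rfl fun x _ => mul_comm _ _
      have h2 : (inner ℂ (g i) (g j) : ℂ) = T i j := by
        rw [hTw i j, PiLp.inner_apply]
        simp only [RCLike.inner_apply]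
        refine Finset.sum_congr rfl fun a _ => ?_
        have : (starRingEnd ℂ) (g i a) = g i a := star_of_nonneg (hwpos a i)
        rw [this]
        exact mul_comm _ _
      have h3 : star (T i j) = T i j := by
        rw [hTw i j, star_sum]
        refine Finset.sum_congr rfl fun a _ => ?_
        exact star_of_nonneg (mul_nonneg (hwpos a i) (hwpos a j))
      rw [h1, h2, h3]
    obtain ⟨L, hL⟩ := exists_isometry_of_gram f g hgram
    let U : Matrix (Fin m) (Fin m) ℂ :=
      Matrix.of fun a b => L (EuclideanSpace.single b 1) a
    have hUmul : ∀ (x : EuclideanSpace ℂ (Fin m)) (a : Fin m),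
        ∑ c, U a c * x c = L x a := by
      intro x a
      have hx : x = ∑ b, x b • EuclideanSpace.single b (1 : ℂ) := by
        ext c
        rw [show (∑ b, x b • EuclideanSpace.single b (1 : ℂ)) c
            = ∑ b, (x b • EuclideanSpace.single b (1 : ℂ)) c from
          by rw [WithLp.ofLp_sum]; exact Finset.sum_apply c Finset.univ _]
        simp [EuclideanSpace.single_apply, PiLp.smul_apply, mul_ite]
      conv_rhs => rw [hx]
      rw [map_sum]
      rw [show (∑ b, L (x b • EuclideanSpace.single b (1 : ℂ))) a
          = ∑ b, (L (x b • EuclideanSpace.single b (1 : ℂ))) a from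
        by rw [WithLp.ofLp_sum]; exact Finset.sum_apply a Finset.univ _]
      refine Finset.sum_congr rfl fun b _ => ?_
      rw [_root_.map_smul]
      simp [U, PiLp.smul_apply, mul_comm]
    have hU2 : Uᴴ * U = 1 := by
      ext b c
      have him := L.inner_map_map (EuclideanSpace.single b (1 : ℂ))
        (EuclideanSpace.single c (1 : ℂ))
      rw [PiLp.inner_apply] at him
      rw [EuclideanSpace.inner_single_left] at him
      simp only [RCLike.inner_apply] at him
      simp only [Matrix.mul_apply, Matrix.conjTranspose_apply, Matrix.one_apply, U,
        Matrix.of_apply, Complex.star_def]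
      rw [show (∑ j, (starRingEnd ℂ) ((L (EuclideanSpace.single b 1)) j) * (L (EuclideanSpace.single c 1)) j) = ∑ j, (L (EuclideanSpace.single c 1)) j * (starRingEnd ℂ) ((L (EuclideanSpace.single b 1)) j) from Finset.sum_congr rfl fun j _ => mul_comm _ _, him]
      simp [EuclideanSpace.single_apply, eq_comm]
    refine ⟨U, mul_eq_one_comm.mpr hU2, hU2, ?_⟩
    intro p
    have := hUmul (f p.2) p.1
    have hfv : ∀ c, f p.2 c = v (c, p.2) := fun c => rfl
    rw [show (∑ c : Fin m, U p.1 c * v (c, p.2)) = ∑ c, U p.1 c * f p.2 c from rfl, this,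
      hL p.2]
    exact hwpos p.1 p.2


end CPCPPaper
end

section
/- A linear map Φ : M_n → M_m is completely positive completely positive (CPCP) if and only if its Choi matrix J(Φ) = Σ_{i,j=0}^{n-1} |i⟩⟨j| ⊗ Φ(|i⟩⟨j|) is a completely positive matrix. -/
open Matrix BigOperators
open scoped ComplexOrder

namespace CPCPPaper

lemma isCPMatrix_of_fintype_sum {ι : Type*} [Fintype ι] {κ : Type*} [Fintype κ]
    (v : κ → ι → ℂ) (hv : ∀ j i, 0 ≤ v j i) :
    IsCPMatrix (∑ j, Matrix.vecMulVec (v j) (v j)) := by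
  refine ⟨Fintype.card κ, v ∘ (Fintype.equivFin κ).symm, fun j i => hv _ _, ?_⟩
  exact (Fintype.sum_equiv (Fintype.equivFin κ).symm _ _ fun _ => rfl).symm

lemma apply_entry_eq_sum {n m : ℕ}
    (Φ : Matrix (Fin n) (Fin n) ℂ →ₗ[ℂ] Matrix (Fin m) (Fin m) ℂ)
    (A : Matrix (Fin n) (Fin n) ℂ) (a b : Fin m) :
    Φ A a b = ∑ i, ∑ j, A i j * Φ (Matrix.single i j 1) a b := by
  have hA : A = ∑ i, ∑ j, A i j • Matrix.single i j (1 : ℂ) := by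
    conv_lhs => rw [Matrix.matrix_eq_sum_single A]
    simp [Matrix.smul_single]
  conv_lhs => rw [hA]
  simp only [map_sum, _root_.map_smul, Matrix.sum_apply, Matrix.smul_apply, smul_eq_mul]

/-- A linear map `Φ : M_n → M_m` is CPCP iff its Choi matrix is a
completely positive matrix. -/
theorem statement_1 {n m : ℕ}
    (Φ : Matrix (Fin n) (Fin n) ℂ →ₗ[ℂ] Matrix (Fin m) (Fin m) ℂ) :
    IsCPCP ⇑Φ ↔ IsCPMatrix (choiMatrix ⇑Φ) := by
  constructor
  · intro h
    set w : Fin n × Fin n → ℂ := fun p => if p.1 = p.2 then 1 else 0 with hw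
    have hX : IsCPMatrix (Matrix.vecMulVec w w) := by
      refine ⟨1, fun _ => w, fun j p => ?_, by simp⟩
      by_cases hp : p.1 = p.2 <;> simp [hw, hp]
    have hmat : ∀ i j : Fin n,
        (Matrix.of fun i' j' => Matrix.vecMulVec w w (i, i') (j, j')) =
          Matrix.single i j (1 : ℂ) := by
      intro i j; ext i' j'
      simp only [Matrix.of_apply, Matrix.vecMulVec_apply, Matrix.single, hw]
      by_cases h1 : i = i' <;> by_cases h2 : j = j' <;> simp [h1, h2]
    have hcp := h n (Matrix.vecMulVec w w) hX
    convert hcp using 1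
    ext ⟨i, a⟩ ⟨j, b⟩
    show Φ (Matrix.single i j 1) a b =
      Φ (Matrix.of fun i' j' => Matrix.vecMulVec w w (i, i') (j, j')) a b
    rw [hmat i j]
  · rintro ⟨K, v, hv, hJ⟩ k X ⟨S, u, hu, hX⟩
    have hJentry : ∀ (i j : Fin n) (a b : Fin m),
        Φ (Matrix.single i j 1) a b = ∑ r, v r (i, a) * v r (j, b) := by
      intro i j a b
      have := congrFun (congrFun hJ (i, a)) (j, b)
      simpa [choiMatrix, Matrix.sum_apply, Matrix.vecMulVec_apply] using this
    have hXentry : ∀ (p q : Fin k) (i j : Fin n),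
        X (p, i) (q, j) = ∑ s, u s (p, i) * u s (q, j) := by
      intro p q i j
      rw [hX]
      simp [Matrix.sum_apply, Matrix.vecMulVec_apply]
    have key : tensorExt k (⇑Φ) X =
        ∑ sr : Fin S × Fin K, Matrix.vecMulVec
          (fun pa : Fin k × Fin m => ∑ i, u sr.1 (pa.1, i) * v sr.2 (i, pa.2))
          (fun pa : Fin k × Fin m => ∑ i, u sr.1 (pa.1, i) * v sr.2 (i, pa.2)) := by
      ext ⟨p, a⟩ ⟨q, b⟩
      show Φ (Matrix.of fun i j => X (p, i) (q, j)) a b = _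
      rw [apply_entry_eq_sum]
      simp only [Matrix.sum_apply, Matrix.vecMulVec_apply, Matrix.of_apply]
      have F : Fin S → Fin K → Fin n → Fin n → ℂ := fun s r i j =>
        u s (p, i) * v r (i, a) * (u s (q, j) * v r (j, b))
      calc ∑ i, ∑ j, X (p, i) (q, j) * Φ (Matrix.single i j 1) a b
          = ∑ i, ∑ j, ∑ s, ∑ r,
              u s (p, i) * v r (i, a) * (u s (q, j) * v r (j, b)) := by
            refine Finset.sum_congr rfl fun i _ => Finset.sum_congr rfl fun j _ => ?_
            rw [hXentry, hJentry, Finset.sum_mul_sum]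
            exact Finset.sum_congr rfl fun s _ => Finset.sum_congr rfl fun r _ => by ring
        _ = ∑ i, ∑ s, ∑ j, ∑ r,
              u s (p, i) * v r (i, a) * (u s (q, j) * v r (j, b)) :=
            Finset.sum_congr rfl fun i _ => Finset.sum_comm
        _ = ∑ s, ∑ i, ∑ j, ∑ r,
              u s (p, i) * v r (i, a) * (u s (q, j) * v r (j, b)) :=
            Finset.sum_comm
        _ = ∑ s, ∑ i, ∑ r, ∑ j,
              u s (p, i) * v r (i, a) * (u s (q, j) * v r (j, b)) :=
            Finset.sum_congr rfl fun s _ =>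
              Finset.sum_congr rfl fun i _ => Finset.sum_comm
        _ = ∑ s, ∑ r, ∑ i, ∑ j,
              u s (p, i) * v r (i, a) * (u s (q, j) * v r (j, b)) :=
            Finset.sum_congr rfl fun s _ => Finset.sum_comm
        _ = ∑ s, ∑ r, (∑ i, u s (p, i) * v r (i, a)) * (∑ j, u s (q, j) * v r (j, b)) := by
            refine Finset.sum_congr rfl fun s _ => Finset.sum_congr rfl fun r _ => ?_
            rw [Finset.sum_mul_sum]
        _ = ∑ sr : Fin S × Fin K,
              (∑ i, u sr.1 (p, i) * v sr.2 (i, a)) * (∑ i, u sr.1 (q, i) * v sr.2 (i, b)) := by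
            rw [Fintype.sum_prod_type]
    rw [key]
    exact isCPMatrix_of_fintype_sum _ fun sr pa =>
      Finset.sum_nonneg fun i _ => mul_nonneg (hu _ _) (hv _ _)

end CPCPPaper
end

section
/- For a linear map Φ : M_n → M_m, the Choi matrix J(Φ) is a completely positive matrix if and only if Φ is a completely positive linear map admitting a family of Kraus operators A_1, ..., A_k ∈ M_{m,n} that are all entrywise real and non-negative (i.e., Φ(X) = Σ_j A_j X A_j^* with each A_j ≥ 0 entrywise). Moreover, the CP-rank of J(Φ) equals the minimal number of entrywise non-negative Kraus operators in such a representation. -/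
open Matrix BigOperators
open scoped ComplexOrder

namespace CPCPPaper

section Aux

variable {n m : ℕ}

private lemma conj_of_nonneg {z : ℂ} (h : 0 ≤ z) : (starRingEnd ℂ) z = z :=
  Complex.conj_eq_iff_im.mpr ((Complex.le_def.mp h).2).symm

/-- The Kraus map associated to a family of operators, as a linear map. -/
private noncomputable def krausMap {k : ℕ} (A : Fin k → Matrix (Fin m) (Fin n) ℂ) :
    Matrix (Fin n) (Fin n) ℂ →ₗ[ℂ] Matrix (Fin m) (Fin m) ℂ where
  toFun X := ∑ j, A j * X * (A j)ᴴ
  map_add' X Y := by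
    simp [Matrix.mul_add, Matrix.add_mul, Finset.sum_add_distrib]
  map_smul' c X := by
    simp [Matrix.mul_smul, Matrix.smul_mul, Finset.smul_sum]

private lemma mul_stdBasis_mul_conjT {k : ℕ} (A : Fin k → Matrix (Fin m) (Fin n) ℂ)
    (l : Fin k) (i j : Fin n) (r s : Fin m) :
    (A l * Matrix.single i j (1:ℂ) * (A l)ᴴ) r s
      = A l r i * (starRingEnd ℂ) (A l s j) := by
  simp [Matrix.mul_apply, Matrix.single, Finset.sum_ite_eq,
    Matrix.conjTranspose_apply, ite_and]

private lemma choi_krausMap {k : ℕ} (A : Fin k → Matrix (Fin m) (Fin n) ℂ)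
    (hA : ∀ j r c, 0 ≤ A j r c) :
    choiMatrix ⇑(krausMap A)
      = ∑ j, Matrix.vecMulVec (fun p : Fin n × Fin m => A j p.2 p.1)
          (fun p : Fin n × Fin m => A j p.2 p.1) := by
  ext ⟨i, r⟩ ⟨j, s⟩
  simp only [choiMatrix, Matrix.of_apply, krausMap, LinearMap.coe_mk, AddHom.coe_mk,
    Matrix.sum_apply, Matrix.vecMulVec_apply]
  refine Finset.sum_congr rfl fun l _ => ?_
  rw [mul_stdBasis_mul_conjT, conj_of_nonneg (hA l s j)]

/-- The Choi matrix determines the linear map. -/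
private lemma eq_of_choi_eq (Φ Ψ : Matrix (Fin n) (Fin n) ℂ →ₗ[ℂ] Matrix (Fin m) (Fin m) ℂ)
    (h : choiMatrix ⇑Φ = choiMatrix ⇑Ψ) : ∀ X, Φ X = Ψ X := by
  intro X
  have hX : X = ∑ i, ∑ j, Matrix.single i j (X i j) :=
    Matrix.matrix_eq_sum_single X
  have hsmul : ∀ (i j : Fin n), Matrix.single i j (X i j)
      = X i j • Matrix.single i j (1:ℂ) := by
    intro i j
    rw [Matrix.smul_single, smul_eq_mul, mul_one]
  have key : ∀ (i j : Fin n), Φ (Matrix.single i j (1:ℂ))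
      = Ψ (Matrix.single i j (1:ℂ)) := by
    intro i j
    ext r s
    have := congrFun (congrFun h (i, r)) (j, s)
    simpa [choiMatrix] using this
  conv_lhs => rw [hX]
  conv_rhs => rw [hX]
  simp only [map_sum, hsmul, LinearMap.map_smul, key]

private lemma posSemidef_sum {ι κ : Type*} [Fintype ι] (s : Finset κ)
    (f : κ → Matrix ι ι ℂ) (h : ∀ j ∈ s, (f j).PosSemidef) :
    (∑ j ∈ s, f j).PosSemidef := by
  classical
  induction s using Finset.induction_on with
  | empty => simpa using Matrix.PosSemidef.zero
  | @insert a t hj ih =>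
      rw [Finset.sum_insert hj]
      exact Matrix.PosSemidef.add (h a (Finset.mem_insert_self a t))
        (ih fun j hjt => h j (Finset.mem_insert_of_mem hjt))

/-- Any Kraus representation yields a completely positive map. -/
private lemma isCPMap_of_kraus {k : ℕ}
    (Φ : Matrix (Fin n) (Fin n) ℂ → Matrix (Fin m) (Fin m) ℂ)
    (A : Fin k → Matrix (Fin m) (Fin n) ℂ)
    (hrep : ∀ X, Φ X = ∑ j, A j * X * (A j)ᴴ) : IsCPMap Φ := by
  intro K X hX
  have : tensorExt K Φ X
      = ∑ j, (Matrix.of fun (p : Fin K × Fin m) (q : Fin K × Fin n) =>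
          if p.1 = q.1 then A j p.2 q.2 else 0) * X *
        (Matrix.of fun (p : Fin K × Fin m) (q : Fin K × Fin n) =>
          if p.1 = q.1 then A j p.2 q.2 else 0)ᴴ := by
    ext ⟨a, r⟩ ⟨b, s⟩
    simp only [tensorExt, Matrix.of_apply, hrep, Matrix.sum_apply]
    refine Finset.sum_congr rfl fun l _ => ?_
    simp only [Matrix.mul_apply, Matrix.conjTranspose_apply, Matrix.of_apply,
      Fintype.sum_prod_type, apply_ite (star : ℂ → ℂ), star_zero,
      Finset.sum_ite_irrel, Finset.sum_const_zero, ite_mul, mul_ite, zero_mul, mul_zero,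
      Finset.sum_ite_eq, Finset.mem_univ, if_true]
  rw [this]
  exact posSemidef_sum _ _ fun j _ => hX.mul_mul_conjTranspose_same _

private lemma set_eq (Φ : Matrix (Fin n) (Fin n) ℂ →ₗ[ℂ] Matrix (Fin m) (Fin m) ℂ) :
    {k : ℕ | ∃ v : Fin k → (Fin n × Fin m) → ℂ,
      (∀ j i, 0 ≤ v j i) ∧ choiMatrix ⇑Φ = ∑ j, Matrix.vecMulVec (v j) (v j)}
    = {k : ℕ | ∃ A : Fin k → Matrix (Fin m) (Fin n) ℂ,
      (∀ j r c, 0 ≤ A j r c) ∧ ∀ X, Φ X = ∑ j, A j * X * (A j)ᴴ} := by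
  ext k
  constructor
  · rintro ⟨v, hv, hsum⟩
    refine ⟨fun j => Matrix.of fun r c => v j (c, r), fun j r c => hv j (c, r), ?_⟩
    have hA : ∀ j r c, 0 ≤ (Matrix.of fun r c => v j (c, r) : Matrix (Fin m) (Fin n) ℂ) r c :=
      fun j r c => hv j (c, r)
    have hchoi : choiMatrix ⇑Φ
        = choiMatrix ⇑(krausMap (fun j => (Matrix.of fun r c => v j (c, r)))) := by
      rw [choi_krausMap _ hA, hsum]; rfl
    exact fun X => eq_of_choi_eq Φ _ hchoi X
  · rintro ⟨A, hA, hrep⟩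
    refine ⟨fun j p => A j p.2 p.1, fun j p => hA j p.2 p.1, ?_⟩
    have : choiMatrix ⇑Φ = choiMatrix ⇑(krausMap A) := by
      have : ⇑Φ = ⇑(krausMap A) := funext fun X => by
        simp [krausMap, hrep X]
      rw [this]
    rw [this, choi_krausMap A hA]

end Aux

/-- The Choi matrix of `Φ` is a CP matrix iff `Φ` is a completely positive
map admitting entrywise non-negative Kraus operators; moreover the CP-rank of the Choi
matrix equals the minimal number of entrywise non-negative Kraus operators. -/
theorem statement_2 {n m : ℕ}
    (Φ : Matrix (Fin n) (Fin n) ℂ →ₗ[ℂ] Matrix (Fin m) (Fin m) ℂ) :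
    (IsCPMatrix (choiMatrix ⇑Φ) ↔
      (IsCPMap ⇑Φ ∧ ∃ (k : ℕ) (A : Fin k → Matrix (Fin m) (Fin n) ℂ),
        (∀ j r c, 0 ≤ A j r c) ∧ ∀ X, Φ X = ∑ j, A j * X * (A j)ᴴ)) ∧
    (IsCPMatrix (choiMatrix ⇑Φ) →
      cpRank (choiMatrix ⇑Φ) =
        sInf {k : ℕ | ∃ A : Fin k → Matrix (Fin m) (Fin n) ℂ,
          (∀ j r c, 0 ≤ A j r c) ∧ ∀ X, Φ X = ∑ j, A j * X * (A j)ᴴ}) := by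
  constructor
  · constructor
    · rintro ⟨k, v, hv, hsum⟩
      have hk : k ∈ {k : ℕ | ∃ A : Fin k → Matrix (Fin m) (Fin n) ℂ,
          (∀ j r c, 0 ≤ A j r c) ∧ ∀ X, Φ X = ∑ j, A j * X * (A j)ᴴ} := by
        rw [← set_eq Φ]; exact ⟨v, hv, hsum⟩
      obtain ⟨A, hA, hrep⟩ := hk
      exact ⟨isCPMap_of_kraus ⇑Φ A hrep, k, A, hA, hrep⟩
    · rintro ⟨-, k, A, hA, hrep⟩
      have hk : k ∈ {k : ℕ | ∃ v : Fin k → (Fin n × Fin m) → ℂ,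
          (∀ j i, 0 ≤ v j i) ∧ choiMatrix ⇑Φ = ∑ j, Matrix.vecMulVec (v j) (v j)} := by
        rw [set_eq Φ]; exact ⟨A, hA, hrep⟩
      obtain ⟨v, hv, hsum⟩ := hk
      exact ⟨k, v, hv, hsum⟩
  · intro _
    unfold cpRank
    rw [set_eq Φ]
end CPCPPaper
end

section
/- Let Φ : M_n → M_n be a unital quantum channel (completely positive, trace-preserving, and Φ(I) = I). Then Φ is CPCP if and only if Φ admits a family of Kraus operators that are entrywise real and non-negative and have at most one non-zero entry in each row and at most one non-zero entry in each column. -/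
open Matrix BigOperators
open scoped ComplexOrder

namespace CPCPPaper

section Auxiliary

lemma conj_of_nonneg_s5 {a : ℂ} (ha : 0 ≤ a) : (starRingEnd ℂ) a = a := by
  rw [Complex.conj_eq_iff_im]; exact (Complex.nonneg_iff.mp ha).2.symm

lemma outer_conj {n : ℕ} (A : Matrix (Fin n) (Fin n) ℂ) (hA : ∀ r c, 0 ≤ A r c)
    (a b : Fin n → ℂ) :
    A * vecMulVec a b * Aᴴ = vecMulVec (A *ᵥ a) (A *ᵥ b) := by
  ext r s
  simp only [mul_apply, vecMulVec_apply, conjTranspose_apply, mulVec, dotProduct,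
    RCLike.star_def, conj_of_nonneg_s5 (hA _ _)]
  rw [Finset.sum_mul_sum, Finset.sum_comm]
  apply Finset.sum_congr rfl; intro j _
  rw [Finset.sum_mul]
  apply Finset.sum_congr rfl; intro i _
  ring

lemma cpcp_of_kraus {n k : ℕ}
    (Φ : Matrix (Fin n) (Fin n) ℂ →ₗ[ℂ] Matrix (Fin n) (Fin n) ℂ)
    (A : Fin k → Matrix (Fin n) (Fin n) ℂ)
    (hA : ∀ j r c, 0 ≤ A j r c)
    (hK : ∀ X, Φ X = ∑ j, A j * X * (A j)ᴴ) : IsCPCP ⇑Φ := by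
  rintro m X ⟨k', u, hu, hX⟩
  refine ⟨k' * k, fun s p => (A (finProdFinEquiv.symm s).2 *ᵥ
      (fun i => u (finProdFinEquiv.symm s).1 (p.1, i))) p.2, ?_, ?_⟩
  · intro s p
    exact Finset.sum_nonneg fun i _ => mul_nonneg (hA _ _ _) (hu _ _)
  · ext ⟨p₁, p₂⟩ ⟨q₁, q₂⟩
    have hslice : (Matrix.of fun i j => X ((p₁, i)) ((q₁, j))) =
        ∑ t, vecMulVec (fun i => u t (p₁, i)) (fun j => u t (q₁, j)) := by
      ext i j
      rw [hX]
      simp [vecMulVec_apply, Matrix.sum_apply]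
    rw [tensorExt]
    simp only [Matrix.of_apply]
    rw [hslice, map_sum]
    have : ∀ t, Φ (vecMulVec (fun i => u t (p₁, i)) (fun j => u t (q₁, j))) =
        ∑ j, vecMulVec (A j *ᵥ fun i => u t (p₁, i)) (A j *ᵥ fun i => u t (q₁, i)) := by
      intro t
      rw [hK]
      exact Finset.sum_congr rfl fun j _ => outer_conj (A j) (hA j) _ _
    rw [Finset.sum_congr rfl fun t _ => this t]
    simp only [Matrix.sum_apply, vecMulVec_apply]
    symm
    rw [← Equiv.sum_comp (finProdFinEquiv (m := k') (n := k)), Fintype.sum_prod_type]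
    simp

lemma choi_cp_of_cpcp {n : ℕ}
    (Φ : Matrix (Fin n) (Fin n) ℂ → Matrix (Fin n) (Fin n) ℂ)
    (h : IsCPCP Φ) : IsCPMatrix (choiMatrix Φ) := by
  have hX : IsCPMatrix (Matrix.of fun (p q : Fin n × Fin n) =>
      (if p.1 = p.2 then (1:ℂ) else 0) * (if q.1 = q.2 then 1 else 0)) := by
    refine ⟨1, fun _ p => if p.1 = p.2 then 1 else 0, ?_, ?_⟩
    · intro j i; dsimp only; split <;> simp
    · ext p q; simp [vecMulVec_apply]
  have := h n _ hX
  convert this using 2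
  ext ⟨p₁, p₂⟩ ⟨q₁, q₂⟩
  show choiMatrix Φ _ _ = _
  rw [choiMatrix, tensorExt]
  simp only [Matrix.of_apply]
  congr 2
  ext i j
  simp [Matrix.single, ite_and]
  split <;> simp_all

lemma kraus_of_choi {n k : ℕ}
    (Φ : Matrix (Fin n) (Fin n) ℂ →ₗ[ℂ] Matrix (Fin n) (Fin n) ℂ)
    (w : Fin k → (Fin n × Fin n) → ℂ)
    (hw : choiMatrix ⇑Φ = ∑ j, Matrix.vecMulVec (w j) (w j))
    (hwn : ∀ j p, 0 ≤ w j p) (X : Matrix (Fin n) (Fin n) ℂ) :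
    Φ X = ∑ j, (Matrix.of fun r c => w j (c, r)) * X * (Matrix.of fun r c => w j (c, r))ᴴ := by
  have hE : ∀ p q r s, Φ (Matrix.single p q 1) r s = ∑ j, w j (p, r) * w j (q, s) := by
    intro p q r s
    have : choiMatrix ⇑Φ (p, r) (q, s) = ∑ j, w j (p, r) * w j (q, s) := by
      rw [hw]; simp [Matrix.sum_apply, vecMulVec_apply]
    exact this
  ext r s
  conv_lhs => rw [Matrix.matrix_eq_sum_single X]
  simp only [map_sum, Matrix.sum_apply]
  have hsmul : ∀ p q, Φ (Matrix.single p q (X p q)) r s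
      = X p q * Φ (Matrix.single p q 1) r s := by
    intro p q
    rw [show Matrix.single p q (X p q) = X p q • Matrix.single p q (1:ℂ) by
      rw [Matrix.smul_single]; simp, _root_.map_smul]
    simp
  calc ∑ p, ∑ q, Φ (Matrix.single p q (X p q)) r s
      = ∑ p, ∑ q, X p q * ∑ j, w j (p, r) * w j (q, s) := by
        refine Finset.sum_congr rfl fun p _ => Finset.sum_congr rfl fun q _ => ?_
        rw [hsmul, hE]
    _ = ∑ p, ∑ q, ∑ j, X p q * (w j (p, r) * w j (q, s)) := by
        simp only [Finset.mul_sum]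
    _ = ∑ p, ∑ j, ∑ q, X p q * (w j (p, r) * w j (q, s)) :=
        Finset.sum_congr rfl fun p _ => Finset.sum_comm
    _ = ∑ j, ∑ p, ∑ q, X p q * (w j (p, r) * w j (q, s)) := Finset.sum_comm
    _ = ∑ j, ((Matrix.of fun r c => w j (c, r)) * X * (Matrix.of fun r c => w j (c, r))ᴴ) r s := by
        refine Finset.sum_congr rfl fun j _ => ?_
        simp only [Matrix.mul_apply, Matrix.conjTranspose_apply, Matrix.of_apply,
          RCLike.star_def, conj_of_nonneg_s5 (hwn _ _), Finset.sum_mul]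
        rw [Finset.sum_comm]
        refine Finset.sum_congr rfl fun p _ => Finset.sum_congr rfl fun q _ => ?_
        ring

end Auxiliary

/-- A unital quantum channel is CPCP iff it admits a family of entrywise
non-negative Kraus operators each having at most one non-zero entry in each row and at
most one non-zero entry in each column. -/
theorem statement_5 {n : ℕ}
    (Φ : Matrix (Fin n) (Fin n) ℂ →ₗ[ℂ] Matrix (Fin n) (Fin n) ℂ)
    (hCP : IsCPMap ⇑Φ) (hTP : IsTracePreserving ⇑Φ) (hU : Φ 1 = 1) :
    IsCPCP ⇑Φ ↔
      ∃ (k : ℕ) (A : Fin k → Matrix (Fin n) (Fin n) ℂ),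
        (∀ j r c, 0 ≤ A j r c) ∧
        (∀ j r c₁ c₂, A j r c₁ ≠ 0 → A j r c₂ ≠ 0 → c₁ = c₂) ∧
        (∀ j c r₁ r₂, A j r₁ c ≠ 0 → A j r₂ c ≠ 0 → r₁ = r₂) ∧
        (∀ X, Φ X = ∑ j, A j * X * (A j)ᴴ) := by
  
  constructor
  · intro h
    obtain ⟨k, w, hwn, hw⟩ := choi_cp_of_cpcp ⇑Φ h
    set A : Fin k → Matrix (Fin n) (Fin n) ℂ := fun j => Matrix.of fun r c => w j (c, r)
      with hAdef
    have hAn : ∀ j r c, 0 ≤ A j r c := fun j r c => hwn j (c, r)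
    have hK : ∀ X, Φ X = ∑ j, A j * X * (A j)ᴴ := fun X => kraus_of_choi Φ w hw hwn X
    have hEouter : ∀ c₁ c₂ : Fin n, Matrix.single c₁ c₂ (1:ℂ) =
        vecMulVec (Pi.single c₁ 1) (Pi.single c₂ 1) := by
      intro c₁ c₂
      ext i j
      simp only [Matrix.single, Matrix.of_apply, vecMulVec_apply, Pi.single_apply,
        eq_comm, ite_and]
      split_ifs <;> simp
    refine ⟨k, A, hAn, ?_, ?_, hK⟩
    · intro j r c₁ c₂ h1 h2
      by_contra hne
      have ht := hTP (Matrix.single c₁ c₂ 1)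
      rw [hK, Matrix.trace_single_eq_of_ne c₁ c₂ (1:ℂ) hne] at ht
      rw [Finset.sum_congr rfl (fun j _ => by
        rw [hEouter, outer_conj (A j) (hA := hAn j)])] at ht
      have ht2 : ∑ j, ∑ r, A j r c₁ * A j r c₂ = 0 := by
        rw [← ht]
        simp only [Matrix.trace, Matrix.diag, vecMulVec_apply, mulVec_single,
          Matrix.sum_apply, mul_one, Pi.smul_apply, op_smul_eq_mul, Matrix.col_apply]
        exact Finset.sum_comm
      have hnn : ∀ j ∈ Finset.univ, (0:ℂ) ≤ ∑ r, A j r c₁ * A j r c₂ :=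
        fun j _ => Finset.sum_nonneg fun r _ => mul_nonneg (hAn _ _ _) (hAn _ _ _)
      have hz := (Finset.sum_eq_zero_iff_of_nonneg
        (fun r _ => mul_nonneg (hAn j r c₁) (hAn j r c₂))).mp
        ((Finset.sum_eq_zero_iff_of_nonneg hnn).mp ht2 j (Finset.mem_univ j)) r
        (Finset.mem_univ r)
      exact (mul_ne_zero h1 h2) hz
    · intro j c r₁ r₂ h1 h2
      by_contra hne
      have hU' : ((∑ j, A j * 1 * (A j)ᴴ : Matrix (Fin n) (Fin n) ℂ)) r₁ r₂ = 0 := by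
        rw [← hK, hU, Matrix.one_apply_ne hne]
      have ht2 : ∑ j, ∑ c, A j r₁ c * A j r₂ c = 0 := by
        rw [← hU']
        simp only [Matrix.sum_apply, Matrix.mul_one, Matrix.mul_apply,
          Matrix.conjTranspose_apply, RCLike.star_def, conj_of_nonneg_s5 (hAn _ _ _)]
      have hnn : ∀ j ∈ Finset.univ, (0:ℂ) ≤ ∑ c, A j r₁ c * A j r₂ c :=
        fun j _ => Finset.sum_nonneg fun c _ => mul_nonneg (hAn _ _ _) (hAn _ _ _)
      have hz := (Finset.sum_eq_zero_iff_of_nonneg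
        (fun c _ => mul_nonneg (hAn j r₁ c) (hAn j r₂ c))).mp
        ((Finset.sum_eq_zero_iff_of_nonneg hnn).mp ht2 j (Finset.mem_univ j)) c
        (Finset.mem_univ c)
      exact (mul_ne_zero h1 h2) hz
  · rintro ⟨k, A, hA, -, -, hK⟩
    exact cpcp_of_kraus Φ A hA hK
end CPCPPaper
end

section
/- Let {|v_0⟩, ..., |v_{n-1}⟩} be an orthonormal basis of C^n and define the measure-and-prepare channel Φ : M_n → M_n by Φ(X) = Σ_{j=0}^{n-1} (⟨v_j| X |v_j⟩) |j⟩⟨j|, where {|j⟩} is the standard basis. Then Φ is always CP-preserving; and if at least one entry of at least one of the projections |v_j⟩⟨v_j| is not real and non-negative, then Φ is not CPCP. -/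
open Matrix BigOperators
open scoped ComplexOrder

namespace CPCPPaper

/-- The measure-and-prepare channel `X ↦ ∑ⱼ ⟨vⱼ|X|vⱼ⟩ |j⟩⟨j|`. -/
noncomputable def mpChannel {n : ℕ} (v : Fin n → Fin n → ℂ)
    (X : Matrix (Fin n) (Fin n) ℂ) : Matrix (Fin n) (Fin n) ℂ :=
  Matrix.of fun a b =>
    if a = b then ∑ i, ∑ i', star (v a i) * X i i' * v a i' else 0

lemma cp_entry_nonneg {ι : Type*} [Fintype ι] {X : Matrix ι ι ℂ}
    (hX : IsCPMatrix X) (i j : ι) : 0 ≤ X i j := by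
  obtain ⟨k, w, hw, hXe⟩ := hX
  rw [hXe]
  simp only [Matrix.sum_apply, Matrix.vecMulVec_apply]
  exact Finset.sum_nonneg fun l _ => mul_nonneg (hw l i) (hw l j)

/-- For an orthonormal basis `{|vⱼ⟩}`, the measure-and-prepare channel
is CP-preserving; and if some entry of some projection `|vⱼ⟩⟨vⱼ|` is not real and
non-negative then it is not CPCP. -/
theorem statement_8 {n : ℕ} (v : Fin n → Fin n → ℂ)
    (horth : ∀ j k, ∑ i, star (v j i) * v k i = if j = k then (1 : ℂ) else 0) :
    IsCPPreserving (mpChannel v) ∧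
      ((∃ j a b, ¬ (0 ≤ v j a * star (v j b))) → ¬ IsCPCP (mpChannel v)) := by
  classical
  have hcomp : ∀ i i' : Fin n, ∑ a, v a i * star (v a i') = if i = i' then (1 : ℂ) else 0 := by
    set A : Matrix (Fin n) (Fin n) ℂ := Matrix.of fun j i => star (v j i) with hAdef
    have hA : A * Aᴴ = 1 := by
      ext j k
      rw [Matrix.mul_apply]
      simp only [hAdef, Matrix.conjTranspose_apply, Matrix.of_apply, star_star]
      rw [horth j k, Matrix.one_apply]
    have hA' : Aᴴ * A = 1 := mul_eq_one_comm.mp hA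
    intro i i'
    have h2 : (Aᴴ * A) i i' = (1 : Matrix (Fin n) (Fin n) ℂ) i i' := by rw [hA']
    rw [Matrix.mul_apply] at h2
    simp only [hAdef, Matrix.conjTranspose_apply, Matrix.of_apply, star_star,
      Matrix.one_apply] at h2
    exact h2
  constructor
  · rintro ρ ⟨⟨k, w, hw, hρ⟩, htr⟩
    have hwstar : ∀ l i, star (w l i) = w l i := by
      intro l i
      have h : (w l i).im = 0 := by
        have := (Complex.le_def.mp (hw l i)).2
        simpa using this.symm
      rw [Complex.star_def, Complex.conj_eq_iff_im]
      exact h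
    set d : Fin n → ℂ := fun a => ∑ i, ∑ i', star (v a i) * ρ i i' * v a i' with hddef
    have key : ∀ a, d a = ∑ l : Fin k,
        (∑ i, star (v a i) * w l i) * (∑ i', v a i' * w l i') := by
      intro a
      have h1 : ∀ l : Fin k, (∑ i, star (v a i) * w l i) * (∑ i', v a i' * w l i')
          = ∑ i, ∑ i', star (v a i) * (w l i * w l i') * v a i' := by
        intro l
        rw [Finset.sum_mul_sum]
        exact Finset.sum_congr rfl fun i _ => Finset.sum_congr rfl fun i' _ => by ring
      calc d a = ∑ i, ∑ i', ∑ l, star (v a i) * (w l i * w l i') * v a i' := by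
            refine Finset.sum_congr rfl fun i _ => Finset.sum_congr rfl fun i' _ => ?_
            rw [hρ]
            simp only [Matrix.sum_apply, Matrix.vecMulVec_apply, Finset.mul_sum,
              Finset.sum_mul]
        _ = ∑ i, ∑ l, ∑ i', star (v a i) * (w l i * w l i') * v a i' :=
            Finset.sum_congr rfl fun i _ => Finset.sum_comm
        _ = ∑ l, ∑ i, ∑ i', star (v a i) * (w l i * w l i') * v a i' := Finset.sum_comm
        _ = ∑ l : Fin k, (∑ i, star (v a i) * w l i) * (∑ i', v a i' * w l i') :=
            Finset.sum_congr rfl fun l _ => (h1 l).symm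
    have hdnn : ∀ a, 0 ≤ d a := by
      intro a
      rw [key a]
      refine Finset.sum_nonneg fun l _ => ?_
      have hsec : (∑ i', v a i' * w l i') = star (∑ i, star (v a i) * w l i) := by
        rw [star_sum]
        exact Finset.sum_congr rfl fun i _ => by rw [star_mul', star_star, hwstar]
      rw [hsec]
      exact mul_star_self_nonneg _
    have hΦ : ∀ a b, mpChannel v ρ a b = if a = b then d a else 0 := fun a b => rfl
    have hds : ∀ a, ((Real.sqrt (d a).re : ℝ) : ℂ) * ((Real.sqrt (d a).re : ℝ) : ℂ) = d a := by
      intro a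
      have h := Complex.le_def.mp (hdnn a)
      rw [← Complex.ofReal_mul, Real.mul_self_sqrt (by simpa using h.1)]
      refine Complex.ext (by simp) ?_
      simpa using h.2
    refine ⟨⟨n, fun c i => if i = c then ((Real.sqrt (d c).re : ℝ) : ℂ) else 0, ?_, ?_⟩, ?_⟩
    · intro c i
      dsimp only
      split
      · simpa using Complex.zero_le_real.mpr (Real.sqrt_nonneg _)
      · exact le_refl 0
    · ext a' b
      simp only [Matrix.sum_apply, Matrix.vecMulVec_apply, hΦ]
      by_cases h : a' = b
      · subst h
        simp only [if_pos rfl]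
        rw [Finset.sum_congr rfl (fun c _ => show
            (if a' = c then ((Real.sqrt (d c).re : ℝ) : ℂ) else 0) *
            (if a' = c then ((Real.sqrt (d c).re : ℝ) : ℂ) else 0)
            = if a' = c then ((Real.sqrt (d c).re : ℝ) : ℂ) * ((Real.sqrt (d c).re : ℝ) : ℂ)
              else 0 from by split <;> simp)]
        rw [Finset.sum_ite_eq]
        simp [hds a']
      · rw [if_neg h]
        refine (Finset.sum_eq_zero fun c _ => ?_).symm
        by_cases h1 : a' = c
        · have h2 : b ≠ c := fun hb => h (h1.trans hb.symm)
          simp [if_neg h2]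
        · simp [if_neg h1]
    · have h0 : (mpChannel v ρ).trace = ∑ a, d a := by
        simp [Matrix.trace, Matrix.diag, hΦ]
      rw [h0]
      have h2 : ∑ a, d a = ∑ i, ρ i i := by
        have hswap : ∑ a, d a = ∑ i, ∑ i', ∑ a, star (v a i) * ρ i i' * v a i' := by
          rw [Finset.sum_comm]
          exact Finset.sum_congr rfl fun i _ => Finset.sum_comm
        rw [hswap]
        refine Finset.sum_congr rfl fun i _ => ?_
        have hinner : ∀ i', ∑ a, star (v a i) * ρ i i' * v a i'
            = if i' = i then ρ i i' else 0 := by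
          intro i'
          have h3 : ∑ a, star (v a i) * ρ i i' * v a i'
              = ρ i i' * ∑ a, v a i' * star (v a i) := by
            rw [Finset.mul_sum]
            exact Finset.sum_congr rfl fun c _ => by ring
          rw [h3, hcomp i' i]
          split <;> simp
        simp only [hinner]
        simp
      rw [h2]
      have : ρ.trace = ∑ i, ρ i i := by simp [Matrix.trace, Matrix.diag]
      rw [← this, htr]
  · rintro ⟨j, a, b, hneg⟩ hcpcp
    set x : Fin n × Fin n → ℂ := fun p => if p.1 = p.2 then 1 else 0 with hxdef
    have hX : IsCPMatrix (Matrix.vecMulVec x x) := by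
      refine ⟨1, fun _ => x, fun _ p => ?_, ?_⟩
      · rw [hxdef]
        dsimp only
        split
        · exact zero_le_one
        · exact le_refl 0
      · exact (Fin.sum_univ_one fun _ => Matrix.vecMulVec x x).symm
    have hY := hcpcp n _ hX
    have hent := cp_entry_nonneg hY (b, j) (a, j)
    apply hneg
    have hval : tensorExt n (mpChannel v) (Matrix.vecMulVec x x) (b, j) (a, j)
        = v j a * star (v j b) := by
      show (if j = j then
          ∑ i, ∑ i', star (v j i) * (Matrix.vecMulVec x x ((b, j).1, i) ((a, j).1, i'))
            * v j i' else 0) = v j a * star (v j b)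
      rw [if_pos rfl]
      simp only [Matrix.vecMulVec_apply, hxdef]
      simp [mul_ite, ite_mul, Finset.sum_ite_eq, mul_comm]
    rw [hval] at hent
    exact hent
end CPCPPaper
end

section
/- Let Φ : M_2 → M_2 be a quantum channel represented in the Pauli basis {I, X, Y, Z} by the 4×4 real matrix [Φ] with first row (1,0,0,0), first column (1, t_x, t_y, t_z)^T, and remaining 3×3 block T (so Φ(I) = I + t_x X + t_y Y + t_z Z and the columns of T give the Pauli coefficients of Φ(X), Φ(Y), Φ(Z)). Then Φ is CP-preserving if and only if t_y = T_{y,x} = T_{y,z} = 0, t_x ≥ |T_{x,z}|, and T_{x,x} ≥ −√(t_x² − T_{x,z}²). -/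
open Matrix BigOperators
open scoped ComplexOrder

namespace CPCPPaper

lemma cp_entries {ι : Type*} [Fintype ι] {X : Matrix ι ι ℂ} (h : IsCPMatrix X)
    (i j : ι) : 0 ≤ X i j := by
  obtain ⟨k, v, hv, rfl⟩ := h
  rw [Matrix.sum_apply]
  exact Finset.sum_nonneg fun l _ => mul_nonneg (hv l i) (hv l j)

lemma vecMulVec_psd {ι : Type*} [Fintype ι] {v : ι → ℂ} (hv : ∀ i, 0 ≤ v i) :
    (Matrix.vecMulVec v v).PosSemidef := by
  have hstar : star v = v := funext fun i => (IsSelfAdjoint.of_nonneg (hv i))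
  rw [Matrix.vecMulVec_eq Unit, show Matrix.replicateRow Unit v = (Matrix.replicateCol Unit v)ᴴ by
    rw [Matrix.conjTranspose_replicateCol, hstar]]
  exact Matrix.posSemidef_self_mul_conjTranspose _

lemma cp_psd {ι : Type*} [Fintype ι] {X : Matrix ι ι ℂ} (h : IsCPMatrix X) :
    X.PosSemidef := by
  obtain ⟨k, v, hv, rfl⟩ := h
  induction (Finset.univ : Finset (Fin k)) using Finset.induction_on with
  | empty => simp [Matrix.PosSemidef.zero]
  | insert _ _ hi ih =>
    rw [Finset.sum_insert hi]
    exact (vecMulVec_psd (hv _)).add ih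

lemma cp_of_real_vecs {ι : Type*} [Fintype ι] (X : Matrix ι ι ℂ) (k : ℕ)
    (w : Fin k → ι → ℝ) (hw : ∀ j i, 0 ≤ w j i)
    (hX : ∀ i j, X i j = ((∑ l, w l i * w l j : ℝ) : ℂ)) : IsCPMatrix X := by
  refine ⟨k, fun l i => ((w l i : ℝ) : ℂ), fun j i => by
    rw [Complex.zero_le_real]; exact hw j i, ?_⟩
  ext i j
  rw [Matrix.sum_apply, hX]
  push_cast
  simp [Matrix.vecMulVec_apply]

lemma psd2 {a b c : ℝ} (h : (!![(a:ℂ), b; b, c]).PosSemidef) :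
    0 ≤ a ∧ 0 ≤ c ∧ b ^ 2 ≤ a * c := by
  have ha := h.dotProduct_mulVec_nonneg ![1, 0]
  have hc := h.dotProduct_mulVec_nonneg ![0, 1]
  simp [dotProduct, Matrix.mulVec, Fin.sum_univ_two] at ha hc
  refine ⟨ha, hc, ?_⟩
  rcases eq_or_lt_of_le ha with h0 | hpos
  · have hb := h.dotProduct_mulVec_nonneg ![(c+1 : ℂ), -b]
    have heq : star (![(c+1 : ℂ), -b]) ⬝ᵥ (!![(a:ℂ), b; b, c] *ᵥ ![(c+1 : ℂ), -b])
        = ((a*(c+1)^2 - (c+2)*b^2 : ℝ) : ℂ) := by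
      simp [dotProduct, Matrix.mulVec, Fin.sum_univ_two]
      push_cast
      ring
    rw [heq, Complex.zero_le_real] at hb
    nlinarith
  · have hb := h.dotProduct_mulVec_nonneg ![(b : ℂ), -a]
    have heq : star (![(b : ℂ), -a]) ⬝ᵥ (!![(a:ℂ), b; b, c] *ᵥ ![(b : ℂ), -a])
        = ((a*(a*c - b^2) : ℝ) : ℂ) := by
      simp [dotProduct, Matrix.mulVec, Fin.sum_univ_two]
      push_cast
      ring
    rw [heq, Complex.zero_le_real] at hb
    nlinarith

lemma cp_of_real {a b c : ℝ} (ha : 0 ≤ a) (hb : 0 ≤ b) (hc : 0 ≤ c)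
    (h : b ^ 2 ≤ a * c) : IsCPMatrix !![(a:ℂ), b; b, c] := by
  rcases eq_or_lt_of_le ha with h0 | hpos
  · have hb0 : b = 0 := by nlinarith
    refine cp_of_real_vecs _ 1 ![![0, Real.sqrt c]] ?_ ?_
    · intro j i; fin_cases j <;> fin_cases i <;> simp [Real.sqrt_nonneg]
    · intro i j
      fin_cases i <;> fin_cases j <;>
        simp [← h0, hb0, Real.mul_self_sqrt hc]
  · refine cp_of_real_vecs _ 2 ![![Real.sqrt a, b / Real.sqrt a],
      ![0, Real.sqrt (c - b^2/a)]] ?_ ?_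
    · intro j i
      fin_cases j <;> fin_cases i <;>
        simp [Real.sqrt_nonneg, le_div_iff₀ hpos,
          div_nonneg hb (Real.sqrt_nonneg a)]
    · have hsq : Real.sqrt a * Real.sqrt a = a := Real.mul_self_sqrt ha
      have hs2 : Real.sqrt (c - b^2/a) * Real.sqrt (c - b^2/a) = c - b^2/a :=
        Real.mul_self_sqrt (by rw [sub_nonneg, div_le_iff₀ hpos]; nlinarith)
      have hane : Real.sqrt a ≠ 0 := by positivity
      have hX : Real.sqrt a ^ 2 * Real.sqrt ((c*a-b^2)/a) ^ 2 = c*a - b^2 := by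
        rw [Real.sq_sqrt ha, Real.sq_sqrt (div_nonneg (by nlinarith) ha)]; field_simp
      intro i j
      fin_cases i <;> fin_cases j
      all_goals try simp [Fin.sum_univ_two]
      all_goals try norm_cast
      all_goals field_simp
      all_goals nlinarith [hX, hsq, hs2, Real.mul_self_sqrt (show (0:ℝ) ≤ c*a - b^2 by nlinarith)]

lemma psd_of_cpmap {n m : ℕ} {Φ : Matrix (Fin n) (Fin n) ℂ → Matrix (Fin m) (Fin m) ℂ}
    (hCP : IsCPMap Φ) {ρ : Matrix (Fin n) (Fin n) ℂ} (hρ : ρ.PosSemidef) :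
    (Φ ρ).PosSemidef := by
  have h1 : (ρ.submatrix (Prod.snd : Fin 1 × Fin n → Fin n)
      (Prod.snd : Fin 1 × Fin n → Fin n)).PosSemidef := hρ.submatrix _
  have h2 := hCP 1 _ h1
  have heq : Φ ρ = (tensorExt 1 Φ (ρ.submatrix Prod.snd Prod.snd)).submatrix
      (fun i : Fin m => ((0 : Fin 1), i)) (fun i : Fin m => ((0 : Fin 1), i)) := by
    ext i j
    simp only [tensorExt, Matrix.submatrix_apply, Matrix.of_apply]
    congr 1
  rw [heq]
  exact h2.submatrix _

lemma cpstate_structure {ρ : Matrix (Fin 2) (Fin 2) ℂ} (h : IsCPState ρ) :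
    ∃ a b c : ℝ, 0 ≤ a ∧ 0 ≤ b ∧ 0 ≤ c ∧ b ^ 2 ≤ a * c ∧ a + c = 1 ∧
      ρ = !![(a:ℂ), b; b, c] := by
  obtain ⟨hcp, htr⟩ := h
  have h00 := cp_entries hcp 0 0
  have h01 := cp_entries hcp 0 1
  have h10 := cp_entries hcp 1 0
  have h11 := cp_entries hcp 1 1
  have hherm := (cp_psd hcp).1
  have h0110 : ρ 0 1 = ρ 1 0 := by
    have := congrFun (congrFun hherm 1) 0
    simp only [Matrix.conjTranspose_apply] at this
    rw [← this, (IsSelfAdjoint.of_nonneg h01 : star (ρ 0 1) = ρ 0 1)]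
  set a := (ρ 0 0).re
  set b := (ρ 0 1).re
  set c := (ρ 1 1).re
  rw [Complex.le_def] at h00 h01 h11
  simp only [Complex.zero_re, Complex.zero_im] at h00 h01 h11
  have ereal : ∀ w : ℂ, w.im = 0 → w = ((w.re : ℝ) : ℂ) :=
    fun w hw => Complex.ext (by simp) (by simp [hw])
  have hρeq : ρ = !![(a:ℂ), b; b, c] := by
    rw [Matrix.eta_fin_two ρ]
    rw [ereal (ρ 0 0) h00.2.symm, ereal (ρ 0 1) h01.2.symm, ereal (ρ 1 1) h11.2.symm,
      h0110.symm, ereal (ρ 0 1) h01.2.symm]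
    simp
    exact ⟨⟨rfl, rfl⟩, rfl, rfl⟩
  have htr' : a + c = 1 := by
    rw [Matrix.trace_fin_two] at htr
    have := congrArg Complex.re htr
    simpa using this
  have hpsd := psd2 (hρeq ▸ cp_psd hcp)
  exact ⟨a, b, c, h00.1, h01.1, h11.1, hpsd.2.2, htr', hρeq⟩

lemma halfdisk_nonneg {t0 T00 T02 x z : ℝ} (h1 : |T02| ≤ t0)
    (h2 : -Real.sqrt (t0 ^ 2 - T02 ^ 2) ≤ T00) (hx : 0 ≤ x)
    (hdisk : x ^ 2 + z ^ 2 ≤ 1) : 0 ≤ t0 + x * T00 + z * T02 := by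
  set s := Real.sqrt (t0 ^ 2 - T02 ^ 2) with hs
  have ht0 : 0 ≤ t0 := le_trans (abs_nonneg _) h1
  have hs0 : 0 ≤ s := Real.sqrt_nonneg _
  have hss : s ^ 2 = t0 ^ 2 - T02 ^ 2 := Real.sq_sqrt (by nlinarith [abs_nonneg T02, sq_abs T02, abs_le.mp h1])
  have key : x * s ≤ t0 + z * T02 := by
    have hz1 : z ^ 2 ≤ 1 := by nlinarith
    have habs : |z * T02| ≤ t0 := by
      rw [abs_mul]
      calc |z| * |T02| ≤ 1 * t0 := by
            apply mul_le_mul _ h1 (abs_nonneg _) zero_le_one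
            rw [← Real.sqrt_one]
            rw [show |z| = Real.sqrt (z^2) by rw [Real.sqrt_sq_eq_abs]]
            exact Real.sqrt_le_sqrt hz1
        _ = t0 := one_mul t0
    have hrhs : 0 ≤ t0 + z * T02 := by
      have := neg_abs_le (z * T02)
      linarith [abs_le.mp habs]
    nlinarith [sq_nonneg (z * t0 + T02), mul_nonneg hx hs0, sq_abs (z*T02)]
  nlinarith [mul_nonneg hx hs0, mul_le_mul_of_nonneg_left h2 hx]

lemma rep_apply (Φ : Matrix (Fin 2) (Fin 2) ℂ →ₗ[ℂ] Matrix (Fin 2) (Fin 2) ℂ)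
    (t : Fin 3 → ℝ) (T : Matrix (Fin 3) (Fin 3) ℝ)
    (hrep1 : Φ 1 = 1 + ((t 0 : ℂ) • PauliX + (t 1 : ℂ) • PauliY + (t 2 : ℂ) • PauliZ))
    (hrepX : Φ PauliX =
      (T 0 0 : ℂ) • PauliX + (T 1 0 : ℂ) • PauliY + (T 2 0 : ℂ) • PauliZ)
    (hrepZ : Φ PauliZ =
      (T 0 2 : ℂ) • PauliX + (T 1 2 : ℂ) • PauliY + (T 2 2 : ℂ) • PauliZ)
    (a b c : ℝ) :
    Φ !![(a:ℂ), b; b, c] =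
      !![(((a+c)/2 + ((a+c)/2 * t 2 + b * T 2 0 + (a-c)/2 * T 2 2) : ℝ) : ℂ),
         (((a+c)/2 * t 0 + b * T 0 0 + (a-c)/2 * T 0 2 : ℝ) : ℂ)
           - Complex.I * (((a+c)/2 * t 1 + b * T 1 0 + (a-c)/2 * T 1 2 : ℝ) : ℂ);
         (((a+c)/2 * t 0 + b * T 0 0 + (a-c)/2 * T 0 2 : ℝ) : ℂ)
           + Complex.I * (((a+c)/2 * t 1 + b * T 1 0 + (a-c)/2 * T 1 2 : ℝ) : ℂ),
         (((a+c)/2 - ((a+c)/2 * t 2 + b * T 2 0 + (a-c)/2 * T 2 2) : ℝ) : ℂ)] := by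
  have hdecomp : !![(a:ℂ), b; b, c] =
      (((a+c)/2 : ℝ) : ℂ) • (1 : Matrix (Fin 2) (Fin 2) ℂ)
        + (b : ℂ) • PauliX + (((a-c)/2 : ℝ) : ℂ) • PauliZ := by
    ext i j
    fin_cases i <;> fin_cases j <;>
      simp [PauliX, PauliZ, Matrix.one_apply] <;> push_cast <;> ring
  rw [hdecomp, map_add, map_add, LinearMap.map_smul, LinearMap.map_smul, LinearMap.map_smul, hrep1, hrepX, hrepZ]
  ext i j
  fin_cases i <;> fin_cases j <;>
    simp [PauliX, PauliY, PauliZ, Matrix.one_apply] <;> push_cast <;> ring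

set_option maxHeartbeats 1000000 in
/-- A qubit quantum channel, written in the Pauli basis, is
CP-preserving iff `t_y = T_{y,x} = T_{y,z} = 0`, `t_x ≥ |T_{x,z}|` and
`T_{x,x} ≥ -√(t_x² - T_{x,z}²)`. (Indices: `0 = x`, `1 = y`, `2 = z`.) -/
theorem statement_9
    (Φ : Matrix (Fin 2) (Fin 2) ℂ →ₗ[ℂ] Matrix (Fin 2) (Fin 2) ℂ)
    (hCP : IsCPMap ⇑Φ) (hTP : IsTracePreserving ⇑Φ)
    (t : Fin 3 → ℝ) (T : Matrix (Fin 3) (Fin 3) ℝ)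
    (hrep1 : Φ 1 = 1 + ((t 0 : ℂ) • PauliX + (t 1 : ℂ) • PauliY + (t 2 : ℂ) • PauliZ))
    (hrepX : Φ PauliX =
      (T 0 0 : ℂ) • PauliX + (T 1 0 : ℂ) • PauliY + (T 2 0 : ℂ) • PauliZ)
    (hrepY : Φ PauliY =
      (T 0 1 : ℂ) • PauliX + (T 1 1 : ℂ) • PauliY + (T 2 1 : ℂ) • PauliZ)
    (hrepZ : Φ PauliZ =
      (T 0 2 : ℂ) • PauliX + (T 1 2 : ℂ) • PauliY + (T 2 2 : ℂ) • PauliZ) :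
    IsCPPreserving ⇑Φ ↔
      (t 1 = 0 ∧ T 1 0 = 0 ∧ T 1 2 = 0 ∧ |T 0 2| ≤ t 0 ∧
        -Real.sqrt ((t 0) ^ 2 - (T 0 2) ^ 2) ≤ T 0 0) := by
  have key := rep_apply Φ t T hrep1 hrepX hrepZ
  constructor
  · intro h
    have test : ∀ a b c : ℝ, 0 ≤ a → 0 ≤ b → 0 ≤ c → b ^ 2 ≤ a * c → a + c = 1 →
        ((a+c)/2 * t 1 + b * T 1 0 + (a-c)/2 * T 1 2 = 0 ∧
          0 ≤ (a+c)/2 * t 0 + b * T 0 0 + (a-c)/2 * T 0 2) := by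
      intro a b c ha hb hc hbac htr
      have hstate : IsCPState !![(a:ℂ), b; b, c] := by
        refine ⟨cp_of_real ha hb hc hbac, ?_⟩
        rw [Matrix.trace_fin_two]
        simp only [Matrix.cons_val', Matrix.cons_val_zero, Matrix.cons_val_one,
          Matrix.head_cons, Matrix.head_fin_const, Matrix.empty_val',
          Matrix.cons_val_fin_one, Matrix.of_apply]
        push_cast
        exact_mod_cast congrArg (fun x : ℝ => (x : ℂ)) htr
      have h2 := (h _ hstate).1
      have he := cp_entries h2 1 0
      rw [key a b c] at he
      have he' : (0:ℂ) ≤ (((a+c)/2 * t 0 + b * T 0 0 + (a-c)/2 * T 0 2 : ℝ) : ℂ)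
          + Complex.I * (((a+c)/2 * t 1 + b * T 1 0 + (a-c)/2 * T 1 2 : ℝ) : ℂ) := by
        simpa using he
      rw [Complex.le_def] at he'
      simp only [Complex.zero_re, Complex.zero_im, Complex.add_re, Complex.add_im,
        Complex.ofReal_re, Complex.ofReal_im, Complex.mul_re, Complex.mul_im,
        Complex.I_re, Complex.I_im] at he'
      constructor
      · linarith [he'.2]
      · linarith [he'.1]
    have t1 := test (1/2) 0 (1/2) (by norm_num) le_rfl (by norm_num) (by norm_num)
      (by norm_num)
    have ht1 : t 1 = 0 := by have := t1.1; linarith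
    have tz := test 1 0 0 zero_le_one le_rfl le_rfl (by norm_num) (by norm_num)
    have tz' := test 0 0 1 le_rfl le_rfl zero_le_one (by norm_num) (by norm_num)
    have hT12 : T 1 2 = 0 := by have := tz.1; rw [ht1] at this; linarith
    have tx := test (1/2) (1/2) (1/2) (by norm_num) (by norm_num) (by norm_num)
      (by norm_num) (by norm_num)
    have hT10 : T 1 0 = 0 := by have := tx.1; rw [ht1] at this; linarith
    have habs : |T 0 2| ≤ t 0 := by
      rw [abs_le]
      constructor <;> [linarith [tz.2]; linarith [tz'.2]]
    refine ⟨ht1, hT10, hT12, habs, ?_⟩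
    by_cases hT : 0 ≤ T 0 0
    · linarith [Real.sqrt_nonneg ((t 0) ^ 2 - (T 0 2) ^ 2)]
    · push_neg at hT
      set d := Real.sqrt (T 0 0 ^ 2 + T 0 2 ^ 2) with hd
      have hd2 : d ^ 2 = T 0 0 ^ 2 + T 0 2 ^ 2 := Real.sq_sqrt (by positivity)
      have hdpos : 0 < d := by
        rw [hd]
        apply Real.sqrt_pos.mpr
        nlinarith
      have habs2 : T 0 2 ^ 2 ≤ d ^ 2 := by nlinarith
      have habsd : |T 0 2| ≤ d := by
        rw [← sq_abs] at habs2
        nlinarith [abs_nonneg (T 0 2)]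
      have hT02d := abs_le.mp habsd
      have hdne : d ≠ 0 := ne_of_gt hdpos
      have tlast := test (1/2 - T 0 2/(2*d)) (-(T 0 0)/(2*d)) (1/2 + T 0 2/(2*d))
        (by rw [show (1/2 - T 0 2/(2*d) : ℝ) = (d - T 0 2)/(2*d) by field_simp]
            exact div_nonneg (by linarith [hT02d.2]) (by linarith))
        (div_nonneg (by linarith) (by linarith))
        (by rw [show (1/2 + T 0 2/(2*d) : ℝ) = (d + T 0 2)/(2*d) by field_simp]
            exact div_nonneg (by linarith [hT02d.1]) (by linarith))
        (le_of_eq (by field_simp; nlinarith [hd2]))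
        (by ring)
      have hd' : d ≤ t 0 := by
        have hE := tlast.2
        rw [show ((1/2 - T 0 2/(2*d) + (1/2 + T 0 2/(2*d)))/2 * t 0
              + -(T 0 0)/(2*d) * T 0 0
              + (1/2 - T 0 2/(2*d) - (1/2 + T 0 2/(2*d)))/2 * T 0 2 : ℝ)
            = t 0/2 - (T 0 0^2 + T 0 2^2)/(2*d) by field_simp; ring] at hE
        rw [← hd2, show (d^2/(2*d) : ℝ) = d/2 by field_simp] at hE
        linarith
      have hsq : T 0 0 ^ 2 ≤ t 0 ^ 2 - T 0 2 ^ 2 := by nlinarith [hd2, hd', hdpos]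
      have hEnn : (0:ℝ) ≤ t 0 ^ 2 - T 0 2 ^ 2 := le_trans (sq_nonneg _) hsq
      nlinarith [Real.sq_sqrt hEnn, Real.sqrt_nonneg (t 0 ^ 2 - T 0 2 ^ 2), hsq]
  · rintro ⟨h1, h2, h3, h4, h5⟩ ρ hρ
    obtain ⟨a, b, c, ha, hb, hc, hbac, htr, rfl⟩ := cpstate_structure hρ
    have hq0 : ((a+c)/2 * t 1 + b * T 1 0 + (a-c)/2 * T 1 2 : ℝ) = 0 := by
      rw [h1, h2, h3]; ring
    have hp : 0 ≤ ((a+c)/2 * t 0 + b * T 0 0 + (a-c)/2 * T 0 2 : ℝ) := by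
      have := halfdisk_nonneg h4 h5 (show (0:ℝ) ≤ 2*b by linarith)
        (show (2*b)^2 + (2*((a-c)/2))^2 ≤ 1 by nlinarith)
      rw [htr]
      nlinarith [this]
    have hpsd : (Φ !![(a:ℂ), b; b, c]).PosSemidef :=
      psd_of_cpmap hCP (cp_psd (cp_of_real ha hb hc hbac))
    rw [key a b c, hq0] at hpsd ⊢
    simp only [Complex.ofReal_zero, mul_zero, sub_zero, add_zero] at hpsd ⊢
    obtain ⟨ha', hc', hdet⟩ := psd2 hpsd
    constructor
    · exact cp_of_real ha' hp hc' hdet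
    · rw [Matrix.trace_fin_two]
      simp only [Matrix.cons_val', Matrix.cons_val_zero, Matrix.cons_val_one,
        Matrix.head_cons, Matrix.head_fin_const, Matrix.empty_val',
        Matrix.cons_val_fin_one, Matrix.of_apply]
      rw [← Complex.ofReal_add]
      rw [show ((a+c)/2 + ((a+c)/2 * t 2 + b * T 2 0 + (a-c)/2 * T 2 2)
        + ((a+c)/2 - ((a+c)/2 * t 2 + b * T 2 0 + (a-c)/2 * T 2 2)) : ℝ) = a + c by ring]
      rw [htr]
      norm_num


end CPCPPaper
end

section
/- Let Φ : M_2 → M_2 be a unital quantum channel. Then Φ is CPCP if and only if it is CPDNN, if and only if there exist real numbers T_{x,x}, T_{y,y}, T_{z,z} with T_{x,x} ≥ |T_{y,y}| such that Φ(I) = I, Φ(X) = T_{x,x} X, Φ(Y) = T_{y,y} Y, and Φ(Z) = T_{z,z} Z, where X, Y, Z are the Pauli matrices. -/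
open Matrix BigOperators
open scoped ComplexOrder

namespace CPCPPaper

/-! ### Auxiliary lemmas -/

lemma std_apply (a b i j : Fin 2) :
    Matrix.single a b (1:ℂ) i j = if a = i ∧ b = j then 1 else 0 := rfl

lemma real_of_nonneg {z : ℂ} (h : 0 ≤ z) : z = (z.re : ℂ) :=
  Complex.ext (by simp) (by simp [← (Complex.nonneg_iff.mp h).2])

lemma psd_vmv {ι : Type*} [Fintype ι] [DecidableEq ι] (v : ι → ℂ) :
    (Matrix.vecMulVec v (star v)).PosSemidef := by
  have h : Matrix.vecMulVec v (star v)
      = (Matrix.replicateRow (Fin 1) (star v))ᴴ * Matrix.replicateRow (Fin 1) (star v) := by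
    rw [Matrix.conjTranspose_replicateRow, star_star]
    exact Matrix.vecMulVec_eq (Fin 1) _ _
  rw [h]
  exact Matrix.posSemidef_conjTranspose_mul_self _

lemma psd_vmv' {ι : Type*} [Fintype ι] [DecidableEq ι] {v : ι → ℂ}
    (hv : ∀ i, 0 ≤ v i) : (Matrix.vecMulVec v v).PosSemidef := by
  have hs : star v = v := funext fun i => star_of_nonneg (hv i)
  have := psd_vmv v
  rwa [hs] at this

lemma isCP_zero {ι : Type*} [Fintype ι] : IsCPMatrix (0 : Matrix ι ι ℂ) :=
  ⟨0, Fin.elim0, fun j => j.elim0, by simp⟩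

lemma isCP_vmv {ι : Type*} [Fintype ι] {v : ι → ℂ} (hv : ∀ i, 0 ≤ v i) :
    IsCPMatrix (Matrix.vecMulVec v v) :=
  ⟨1, fun _ => v, fun _ => hv, by simp⟩

lemma isCP_add {ι : Type*} [Fintype ι] {X Y : Matrix ι ι ℂ}
    (hX : IsCPMatrix X) (hY : IsCPMatrix Y) : IsCPMatrix (X + Y) := by
  obtain ⟨k₁, v, hv, rfl⟩ := hX
  obtain ⟨k₂, w, hw, rfl⟩ := hY
  refine ⟨k₁ + k₂, Fin.append v w, ?_, ?_⟩
  · intro j i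
    induction j using Fin.addCases with
    | left j => simpa using hv j i
    | right j => simpa using hw j i
  · rw [Fin.sum_univ_add]
    simp

lemma isCP_sum {ι : Type*} [Fintype ι] {K : ℕ} (F : Fin K → Matrix ι ι ℂ)
    (h : ∀ j, IsCPMatrix (F j)) : IsCPMatrix (∑ j, F j) := by
  induction K with
  | zero => simpa using isCP_zero
  | succ K ih =>
      rw [Fin.sum_univ_succ]
      exact isCP_add (h 0) (ih _ fun j => h _)

lemma psd_sum {ι : Type*} [Fintype ι] [DecidableEq ι] {K : ℕ}
    (F : Fin K → Matrix ι ι ℂ) (h : ∀ j, (F j).PosSemidef) :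
    (∑ j, F j).PosSemidef := by
  induction K with
  | zero => simpa using Matrix.PosSemidef.zero
  | succ K ih =>
      rw [Fin.sum_univ_succ]
      exact (h 0).add (ih _ fun j => h _)

lemma cp_isDNN {ι : Type*} [Fintype ι] [DecidableEq ι] {X : Matrix ι ι ℂ}
    (hX : IsCPMatrix X) : IsDNNMatrix X := by
  obtain ⟨K, v, hv, rfl⟩ := hX
  constructor
  · exact psd_sum _ fun j => psd_vmv' (hv j)
  · intro i j
    rw [Matrix.sum_apply]
    exact Finset.sum_nonneg fun t _ =>
      mul_nonneg (hv t i) (hv t j)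

lemma quad_nonneg {ι : Type*} [Fintype ι] {M : Matrix ι ι ℂ} (hM : M.PosSemidef)
    (x : ι → ℂ) : 0 ≤ ∑ p, ∑ q, star (x p) * M p q * x q := by
  have h := hM.dotProduct_mulVec_nonneg x
  have he : dotProduct (star x) (M *ᵥ x)
      = ∑ p, ∑ q, star (x p) * M p q * x q := by
    simp only [dotProduct, Matrix.mulVec, Pi.star_apply, Finset.mul_sum]
    refine Finset.sum_congr rfl fun p _ => Finset.sum_congr rfl fun q _ => by ring
  rwa [he] at h

/-- The maximally entangled indicator vector. -/
def entVec : Fin 2 × Fin 2 → ℂ := fun p => if p.1 = p.2 then 1 else 0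

lemma entVec_nonneg : ∀ p, 0 ≤ entVec p := by
  intro p; unfold entVec; split <;> norm_num

lemma psd_entVec : (Matrix.vecMulVec entVec entVec).PosSemidef :=
  psd_vmv' entVec_nonneg

lemma tensorExt_ent (Φ : Matrix (Fin 2) (Fin 2) ℂ → Matrix (Fin 2) (Fin 2) ℂ)
    (a b i j : Fin 2) :
    tensorExt 2 Φ (Matrix.vecMulVec entVec entVec) (a,i) (b,j)
      = Φ (Matrix.single a b 1) i j := by
  show Φ (Matrix.of fun i' j' =>
      Matrix.vecMulVec entVec entVec (a,i') (b,j')) i j = _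
  have hM : (Matrix.of fun i' j' =>
      Matrix.vecMulVec entVec entVec (a,i') (b,j')) = Matrix.single a b 1 := by
    ext i' j'
    simp only [Matrix.of_apply, Matrix.vecMulVec_apply, entVec, std_apply]
    fin_cases a <;> fin_cases b <;> fin_cases i' <;> fin_cases j' <;> norm_num
  rw [hM]

lemma phi_apply (Φ : Matrix (Fin 2) (Fin 2) ℂ →ₗ[ℂ] Matrix (Fin 2) (Fin 2) ℂ)
    (Txx Tyy Tzz : ℝ) (hU : Φ 1 = 1)
    (hX : Φ PauliX = (Txx : ℂ) • PauliX) (hY : Φ PauliY = (Tyy : ℂ) • PauliY)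
    (hZ : Φ PauliZ = (Tzz : ℂ) • PauliZ) (A : Matrix (Fin 2) (Fin 2) ℂ) :
    Φ A = !![((1+Tzz)/2 : ℝ) * A 0 0 + ((1-Tzz)/2 : ℝ) * A 1 1,
             ((Txx+Tyy)/2 : ℝ) * A 0 1 + ((Txx-Tyy)/2 : ℝ) * A 1 0;
             ((Txx-Tyy)/2 : ℝ) * A 0 1 + ((Txx+Tyy)/2 : ℝ) * A 1 0,
             ((1-Tzz)/2 : ℝ) * A 0 0 + ((1+Tzz)/2 : ℝ) * A 1 1] := by
  have hA : A = ((A 0 0 + A 1 1)/2) • (1 : Matrix (Fin 2) (Fin 2) ℂ)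
      + ((A 0 1 + A 1 0)/2) • PauliX
      + (Complex.I * (A 0 1 - A 1 0)/2) • PauliY
      + ((A 0 0 - A 1 1)/2) • PauliZ := by
    ext i j
    fin_cases i <;> fin_cases j <;>
      simp [PauliX, PauliY, PauliZ, Matrix.one_apply] <;> ring_nf <;>
      simp [Complex.I_sq] <;> ring
  conv_lhs => rw [hA]
  simp only [map_add, _root_.map_smul, hU, hX, hY, hZ, smul_smul]
  ext i j
  fin_cases i <;> fin_cases j <;>
    simp [PauliX, PauliY, PauliZ, Matrix.one_apply] <;> ring_nf <;>
    simp [Complex.I_sq] <;> ring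

lemma extract (Φ : Matrix (Fin 2) (Fin 2) ℂ →ₗ[ℂ] Matrix (Fin 2) (Fin 2) ℂ)
    (hTP : IsTracePreserving ⇑Φ) (hU : Φ 1 = 1)
    (hD : IsDNNMatrix (tensorExt 2 ⇑Φ (Matrix.vecMulVec entVec entVec))) :
    ∃ Txx Tyy Tzz : ℝ, |Tyy| ≤ Txx ∧ Φ 1 = 1 ∧
        Φ PauliX = (Txx : ℂ) • PauliX ∧ Φ PauliY = (Tyy : ℂ) • PauliY ∧
        Φ PauliZ = (Tzz : ℂ) • PauliZ := by
  set E : Fin 2 → Fin 2 → Matrix (Fin 2) (Fin 2) ℂ :=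
    fun a b => Φ (Matrix.single a b 1) with hE
  have hCab : ∀ a b i j,
      tensorExt 2 ⇑Φ (Matrix.vecMulVec entVec entVec) (a,i) (b,j) = E a b i j :=
    fun a b i j => tensorExt_ent ⇑Φ a b i j
  have hN : ∀ a b i j, 0 ≤ E a b i j := by
    intro a b i j
    have := hD.2 (a,i) (b,j)
    rwa [hCab] at this
  have hH : ∀ a b i j, E a b i j = star (E b a j i) := by
    intro a b i j
    have := hD.1.1.apply (a,i) (b,j)
    rw [hCab, hCab] at this
    exact this.symm
  have hsum : E 0 0 + E 1 1 = 1 := by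
    have h1 : Matrix.single (0:Fin 2) (0:Fin 2) (1:ℂ)
        + Matrix.single 1 1 1 = 1 := by
      ext i j; fin_cases i <;> fin_cases j <;>
        simp [Matrix.single, Matrix.one_apply]
    rw [hE]
    simp only [← map_add, h1, hU]
  have htr : ∀ a b, E a b 0 0 + E a b 1 1 = Matrix.single a b (1:ℂ) 0 0
      + Matrix.single a b (1:ℂ) 1 1 := by
    intro a b
    have := hTP (Matrix.single a b 1)
    rw [hE]
    simpa [Matrix.trace_fin_two] using this
  have hzero : ∀ {x y : ℂ}, 0 ≤ x → 0 ≤ y → x + y = 0 → x = 0 ∧ y = 0 :=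
    fun hx hy hxy => (add_eq_zero_iff_of_nonneg hx hy).mp hxy
  have hod : ∀ i j, i ≠ j → E 0 0 i j = 0 ∧ E 1 1 i j = 0 := by
    intro i j hij
    have h1 : E 0 0 i j + E 1 1 i j = 0 := by
      have := congrFun (congrFun hsum i) j
      simpa [Matrix.one_apply, hij] using this
    exact hzero (hN 0 0 i j) (hN 1 1 i j) h1
  have hdg : ∀ a b, (a:Fin 2) ≠ b → E a b 0 0 = 0 ∧ E a b 1 1 = 0 := by
    intro a b hab
    refine hzero (hN a b 0 0) (hN a b 1 1) ?_
    rw [htr a b]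
    simp only [std_apply]
    fin_cases a <;> fin_cases b <;> first
      | (exact absurd rfl hab)
      | norm_num
  set al := (E 0 0 0 0).re with hal
  set G := (E 0 1 0 1).re with hGdef
  set H := (E 0 1 1 0).re with hHdef
  have ha : E 0 0 0 0 = (al:ℂ) := real_of_nonneg (hN 0 0 0 0)
  have hGc : E 0 1 0 1 = (G:ℂ) := real_of_nonneg (hN 0 1 0 1)
  have hHc : E 0 1 1 0 = (H:ℂ) := real_of_nonneg (hN 0 1 1 0)
  have hGnn : (0:ℝ) ≤ G := (Complex.nonneg_iff.mp (hN 0 1 0 1)).1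
  have hHnn : (0:ℝ) ≤ H := (Complex.nonneg_iff.mp (hN 0 1 1 0)).1
  have h0011 : E 0 0 1 1 = 1 - (al:ℂ) := by
    have := htr 0 0
    simp only [std_apply] at this
    norm_num at this
    rw [← ha]; linear_combination this
  have hE11 : E 1 1 = 1 - E 0 0 := by
    rw [← hsum]; abel
  have h1001 : E 1 0 0 1 = (H:ℂ) := by
    rw [hH 1 0 0 1, hHc, RCLike.star_def, Complex.conj_ofReal]
  have h1010 : E 1 0 1 0 = (G:ℂ) := by
    rw [hH 1 0 1 0, hGc, RCLike.star_def, Complex.conj_ofReal]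
  have hdg01 := hdg 0 1 (by decide)
  have hdg10 := hdg 1 0 (by decide)
  have hod01 := hod 0 1 (by decide)
  have hod10 := hod 1 0 (by decide)
  have hPX : PauliX = Matrix.single 0 1 1 + Matrix.single 1 0 1 := by
    ext i j
    simp only [Matrix.add_apply, std_apply, PauliX]
    fin_cases i <;> fin_cases j <;> norm_num
  have hPY : PauliY = (-Complex.I) • Matrix.single 0 1 1
      + Complex.I • Matrix.single 1 0 1 := by
    ext i j
    simp only [Matrix.add_apply, Matrix.smul_apply, std_apply, PauliY, smul_eq_mul]
    fin_cases i <;> fin_cases j <;> norm_num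
  have hPZ : PauliZ = Matrix.single 0 0 1 - Matrix.single 1 1 1 := by
    ext i j
    simp only [Matrix.sub_apply, std_apply, PauliZ]
    fin_cases i <;> fin_cases j <;> norm_num
  refine ⟨G + H, G - H, 2*al - 1, ?_, hU, ?_, ?_, ?_⟩
  · rw [abs_le]; constructor <;> linarith
  · rw [hPX, map_add]
    show E 0 1 + E 1 0 = _
    ext i j
    fin_cases i <;> fin_cases j <;>
      simp [Matrix.add_apply, Matrix.smul_apply, PauliX, hGc, hHc, h1001, h1010,
        hdg01.1, hdg01.2, hdg10.1, hdg10.2] <;> push_cast <;> ring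
  · rw [hPY, map_add, _root_.map_smul, _root_.map_smul]
    show (-Complex.I) • E 0 1 + Complex.I • E 1 0 = _
    ext i j
    fin_cases i <;> fin_cases j <;>
      simp [Matrix.add_apply, Matrix.smul_apply, PauliY, hGc, hHc, h1001, h1010,
        hdg01.1, hdg01.2, hdg10.1, hdg10.2] <;> push_cast <;> ring
  · rw [hPZ, map_sub]
    show E 0 0 - E 1 1 = _
    rw [hE11]
    ext i j
    fin_cases i <;> fin_cases j <;>
      simp [Matrix.sub_apply, Matrix.smul_apply, Matrix.one_apply, PauliZ, ha, h0011,
        hod01.1, hod01.2, hod10.1, hod10.2] <;> push_cast <;> ring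

lemma constraints (Φ : Matrix (Fin 2) (Fin 2) ℂ →ₗ[ℂ] Matrix (Fin 2) (Fin 2) ℂ)
    (hCP : IsCPMap ⇑Φ) (Txx Tyy Tzz : ℝ) (hU : Φ 1 = 1)
    (hX : Φ PauliX = (Txx : ℂ) • PauliX) (hY : Φ PauliY = (Tyy : ℂ) • PauliY)
    (hZ : Φ PauliZ = (Tzz : ℂ) • PauliZ) :
    (Txx+Tyy)/2 ≤ (1+Tzz)/2 ∧ (Txx-Tyy)/2 ≤ (1-Tzz)/2 := by
  have hC := hCP 2 _ psd_entVec
  have hv01 : (Φ (Matrix.single 0 1 1)) 0 1 = (((Txx+Tyy)/2 : ℝ) : ℂ) := by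
    rw [phi_apply Φ Txx Tyy Tzz hU hX hY hZ]
    simp [std_apply]
  have hv10 : (Φ (Matrix.single 1 0 1)) 1 0 = (((Txx+Tyy)/2 : ℝ) : ℂ) := by
    rw [phi_apply Φ Txx Tyy Tzz hU hX hY hZ]
    simp [std_apply]
  have hv00 : (Φ (Matrix.single 0 0 1)) 0 0 = (((1+Tzz)/2 : ℝ) : ℂ) := by
    rw [phi_apply Φ Txx Tyy Tzz hU hX hY hZ]
    simp [std_apply]
  have hv11 : (Φ (Matrix.single 1 1 1)) 1 1 = (((1+Tzz)/2 : ℝ) : ℂ) := by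
    rw [phi_apply Φ Txx Tyy Tzz hU hX hY hZ]
    simp [std_apply]
  have hw01 : (Φ (Matrix.single 0 1 1)) 1 0 = (((Txx-Tyy)/2 : ℝ) : ℂ) := by
    rw [phi_apply Φ Txx Tyy Tzz hU hX hY hZ]
    simp [std_apply]
  have hw10 : (Φ (Matrix.single 1 0 1)) 0 1 = (((Txx-Tyy)/2 : ℝ) : ℂ) := by
    rw [phi_apply Φ Txx Tyy Tzz hU hX hY hZ]
    simp [std_apply]
  have hw00 : (Φ (Matrix.single 0 0 1)) 1 1 = (((1-Tzz)/2 : ℝ) : ℂ) := by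
    rw [phi_apply Φ Txx Tyy Tzz hU hX hY hZ]
    simp [std_apply]
  have hw11 : (Φ (Matrix.single 1 1 1)) 0 0 = (((1-Tzz)/2 : ℝ) : ℂ) := by
    rw [phi_apply Φ Txx Tyy Tzz hU hX hY hZ]
    simp [std_apply]
  constructor
  · have hq := quad_nonneg hC (fun p => (!![1,0;0,-1] : Matrix (Fin 2) (Fin 2) ℂ) p.1 p.2)
    simp only [Fintype.sum_prod_type, Fin.sum_univ_two, tensorExt_ent] at hq
    norm_num [hv00, hv01, hv10, hv11] at hq
    have h2 : (0:ℂ) ≤ ((((1+Tzz)/2 - (Txx+Tyy)/2)*2 : ℝ) : ℂ) := by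
      convert hq using 1
      push_cast
      ring
    rw [Complex.zero_le_real] at h2
    linarith
  · have hq := quad_nonneg hC (fun p => (!![0,1;-1,0] : Matrix (Fin 2) (Fin 2) ℂ) p.1 p.2)
    simp only [Fintype.sum_prod_type, Fin.sum_univ_two, tensorExt_ent] at hq
    norm_num [hw00, hw01, hw10, hw11] at hq
    have h2 : (0:ℂ) ≤ ((((1-Tzz)/2 - (Txx-Tyy)/2)*2 : ℝ) : ℂ) := by
      convert hq using 1
      push_cast
      ring
    rw [Complex.zero_le_real] at h2
    linarith

lemma key (Φ : Matrix (Fin 2) (Fin 2) ℂ →ₗ[ℂ] Matrix (Fin 2) (Fin 2) ℂ)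
    {Txx Tyy Tzz : ℝ} (hU : Φ 1 = 1)
    (hX : Φ PauliX = (Txx : ℂ) • PauliX) (hY : Φ PauliY = (Tyy : ℂ) • PauliY)
    (hZ : Φ PauliZ = (Tzz : ℂ) • PauliZ)
    (h1 : 0 ≤ (Txx+Tyy)/2) (h2 : 0 ≤ (Txx-Tyy)/2)
    (h3 : (Txx+Tyy)/2 ≤ (1+Tzz)/2) (h4 : (Txx-Tyy)/2 ≤ (1-Tzz)/2)
    {k : ℕ} (v : Fin k × Fin 2 → ℂ) (hv : ∀ p, 0 ≤ v p) :
    IsCPMatrix (tensorExt k ⇑Φ (Matrix.vecMulVec v v)) := by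
  have hs1' : (0:ℝ) ≤ (Txx+Tyy)/2 := h1
  have hs2' : (0:ℝ) ≤ (Txx-Tyy)/2 := h2
  have hs3' : (0:ℝ) ≤ (1+Tzz)/2 - (Txx+Tyy)/2 := by linarith
  have hs4' : (0:ℝ) ≤ (1-Tzz)/2 - (Txx-Tyy)/2 := by linarith
  set s1 : ℂ := ((Real.sqrt ((Txx+Tyy)/2) : ℝ) : ℂ) with hs1def
  set s2 : ℂ := ((Real.sqrt ((Txx-Tyy)/2) : ℝ) : ℂ) with hs2def
  set s3 : ℂ := ((Real.sqrt ((1+Tzz)/2 - (Txx+Tyy)/2) : ℝ) : ℂ) with hs3def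
  set s4 : ℂ := ((Real.sqrt ((1-Tzz)/2 - (Txx-Tyy)/2) : ℝ) : ℂ) with hs4def
  have hs1 : s1 * s1 = ((Txx:ℂ) + Tyy)/2 := by
    rw [hs1def, ← Complex.ofReal_mul, Real.mul_self_sqrt hs1']; push_cast; ring
  have hs2 : s2 * s2 = ((Txx:ℂ) - Tyy)/2 := by
    rw [hs2def, ← Complex.ofReal_mul, Real.mul_self_sqrt hs2']; push_cast; ring
  have hs3 : s3 * s3 = (1 + (Tzz:ℂ))/2 - ((Txx:ℂ) + Tyy)/2 := by
    rw [hs3def, ← Complex.ofReal_mul, Real.mul_self_sqrt hs3']; push_cast; ring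
  have hs4 : s4 * s4 = (1 - (Tzz:ℂ))/2 - ((Txx:ℂ) - Tyy)/2 := by
    rw [hs4def, ← Complex.ofReal_mul, Real.mul_self_sqrt hs4']; push_cast; ring
  have hs_nn : ∀ c : ℝ, (0:ℂ) ≤ (Real.sqrt c : ℂ) :=
    fun c => Complex.zero_le_real.mpr (Real.sqrt_nonneg c)
  set w1 : Fin k × Fin 2 → ℂ := fun p => s1 * v p with hw1
  set w2 : Fin k × Fin 2 → ℂ := fun p => s2 * v (p.1, if p.2 = 0 then 1 else 0) with hw2
  set w3 : Fin k × Fin 2 → ℂ := fun p => if p.2 = 0 then s3 * v (p.1, 0) else 0 with hw3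
  set w4 : Fin k × Fin 2 → ℂ := fun p => if p.2 = 0 then s4 * v (p.1, 1) else 0 with hw4
  set w5 : Fin k × Fin 2 → ℂ := fun p => if p.2 = 1 then s4 * v (p.1, 0) else 0 with hw5
  set w6 : Fin k × Fin 2 → ℂ := fun p => if p.2 = 1 then s3 * v (p.1, 1) else 0 with hw6
  have hvnn : ∀ (c : ℝ) (q : Fin k × Fin 2), (0:ℂ) ≤ (Real.sqrt c : ℂ) * v q :=
    fun c q => mul_nonneg (hs_nn c) (hv q)
  have hdecomp : tensorExt k ⇑Φ (Matrix.vecMulVec v v)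
      = Matrix.vecMulVec w1 w1 + Matrix.vecMulVec w2 w2 + Matrix.vecMulVec w3 w3
      + Matrix.vecMulVec w4 w4 + Matrix.vecMulVec w5 w5 + Matrix.vecMulVec w6 w6 := by
    ext ⟨a,i⟩ ⟨b,j⟩
    show Φ (Matrix.of fun i' j' => Matrix.vecMulVec v v (a,i') (b,j')) i j = _
    rw [phi_apply Φ Txx Tyy Tzz hU hX hY hZ]
    fin_cases i <;> fin_cases j <;>
      (simp only [Matrix.add_apply, Matrix.vecMulVec_apply, Matrix.of_apply,
        hw1, hw2, hw3, hw4, hw5, hw6]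
       norm_num
       push_cast)
    · linear_combination (-(v (a,0) * v (b,0))) * (hs1 + hs3) +
        (-(v (a,1) * v (b,1))) * (hs2 + hs4)
    · linear_combination (-(v (a,0) * v (b,1))) * hs1 + (-(v (a,1) * v (b,0))) * hs2
    · linear_combination (-(v (a,1) * v (b,0))) * hs1 + (-(v (a,0) * v (b,1))) * hs2
    · linear_combination (-(v (a,1) * v (b,1))) * (hs1 + hs3) +
        (-(v (a,0) * v (b,0))) * (hs2 + hs4)
  rw [hdecomp]
  have c1 : IsCPMatrix (Matrix.vecMulVec w1 w1) := isCP_vmv (fun p => by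
    rw [hw1, hs1def]; exact hvnn _ _)
  have c2 : IsCPMatrix (Matrix.vecMulVec w2 w2) := isCP_vmv (fun p => by
    rw [hw2, hs2def]; exact hvnn _ _)
  have c3 : IsCPMatrix (Matrix.vecMulVec w3 w3) := isCP_vmv (fun p => by
    rw [hw3, hs3def]; dsimp only; split
    · exact hvnn _ _
    · exact le_refl 0)
  have c4 : IsCPMatrix (Matrix.vecMulVec w4 w4) := isCP_vmv (fun p => by
    rw [hw4, hs4def]; dsimp only; split
    · exact hvnn _ _
    · exact le_refl 0)
  have c5 : IsCPMatrix (Matrix.vecMulVec w5 w5) := isCP_vmv (fun p => by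
    rw [hw5, hs4def]; dsimp only; split
    · exact hvnn _ _
    · exact le_refl 0)
  have c6 : IsCPMatrix (Matrix.vecMulVec w6 w6) := isCP_vmv (fun p => by
    rw [hw6, hs3def]; dsimp only; split
    · exact hvnn _ _
    · exact le_refl 0)
  exact isCP_add (isCP_add (isCP_add (isCP_add (isCP_add c1 c2) c3) c4) c5) c6

lemma tensorExt_sum (Φ : Matrix (Fin 2) (Fin 2) ℂ →ₗ[ℂ] Matrix (Fin 2) (Fin 2) ℂ)
    {k K : ℕ} (F : Fin K → Matrix (Fin k × Fin 2) (Fin k × Fin 2) ℂ) :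
    tensorExt k ⇑Φ (∑ t, F t) = ∑ t, tensorExt k ⇑Φ (F t) := by
  ext p q
  show Φ (Matrix.of fun i j => (∑ t, F t) (p.1,i) (q.1,j)) p.2 q.2 = _
  have h1 : (Matrix.of fun i j => (∑ t, F t) (p.1,i) (q.1,j))
      = ∑ t, Matrix.of (fun i j => F t (p.1,i) (q.1,j)) := by
    ext i j
    simp [Matrix.sum_apply]
  rw [h1, map_sum]
  simp only [Matrix.sum_apply]
  rfl

/-- A unital qubit quantum channel is CPCP iff it is CPDNN, iff there
are reals `T_{x,x} ≥ |T_{y,y}|` and `T_{z,z}` with `Φ(I) = I`, `Φ(X) = T_{x,x} X`,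
`Φ(Y) = T_{y,y} Y`, `Φ(Z) = T_{z,z} Z`. -/
theorem statement_11
    (Φ : Matrix (Fin 2) (Fin 2) ℂ →ₗ[ℂ] Matrix (Fin 2) (Fin 2) ℂ)
    (hCP : IsCPMap ⇑Φ) (hTP : IsTracePreserving ⇑Φ) (hU : Φ 1 = 1) :
    (IsCPCP ⇑Φ ↔ IsCPDNN ⇑Φ) ∧
    (IsCPCP ⇑Φ ↔
      ∃ Txx Tyy Tzz : ℝ, |Tyy| ≤ Txx ∧ Φ 1 = 1 ∧
        Φ PauliX = (Txx : ℂ) • PauliX ∧ Φ PauliY = (Tyy : ℂ) • PauliY ∧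
        Φ PauliZ = (Tzz : ℂ) • PauliZ) := by
  -- Forward extraction: either hypothesis yields the Pauli-diagonal form.
  have hCPtoT : IsCPCP ⇑Φ → ∃ Txx Tyy Tzz : ℝ, |Tyy| ≤ Txx ∧ Φ 1 = 1 ∧
      Φ PauliX = (Txx : ℂ) • PauliX ∧ Φ PauliY = (Tyy : ℂ) • PauliY ∧
      Φ PauliZ = (Tzz : ℂ) • PauliZ := by
    intro h
    exact extract Φ hTP hU (cp_isDNN (h 2 _ (isCP_vmv entVec_nonneg)))
  have hDNNtoT : IsCPDNN ⇑Φ → ∃ Txx Tyy Tzz : ℝ, |Tyy| ≤ Txx ∧ Φ 1 = 1 ∧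
      Φ PauliX = (Txx : ℂ) • PauliX ∧ Φ PauliY = (Tyy : ℂ) • PauliY ∧
      Φ PauliZ = (Tzz : ℂ) • PauliZ := by
    intro h
    refine extract Φ hTP hU (h 2 _ ⟨psd_entVec, ?_⟩)
    intro p q
    exact mul_nonneg (entVec_nonneg p) (entVec_nonneg q)
  have hTtoCPCP : (∃ Txx Tyy Tzz : ℝ, |Tyy| ≤ Txx ∧ Φ 1 = 1 ∧
      Φ PauliX = (Txx : ℂ) • PauliX ∧ Φ PauliY = (Tyy : ℂ) • PauliY ∧
      Φ PauliZ = (Tzz : ℂ) • PauliZ) → IsCPCP ⇑Φ := by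
    rintro ⟨Txx, Tyy, Tzz, hT, -, hX, hY, hZ⟩ k X hXcp
    obtain ⟨hT1, hT2⟩ := abs_le.mp hT
    obtain ⟨hc3, hc4⟩ := constraints Φ hCP Txx Tyy Tzz hU hX hY hZ
    obtain ⟨K, v, hv, rfl⟩ := hXcp
    rw [tensorExt_sum]
    exact isCP_sum _ fun t =>
      key Φ hU hX hY hZ (by linarith) (by linarith) hc3 hc4 (v t) (hv t)
  have hTtoCPDNN : (∃ Txx Tyy Tzz : ℝ, |Tyy| ≤ Txx ∧ Φ 1 = 1 ∧
      Φ PauliX = (Txx : ℂ) • PauliX ∧ Φ PauliY = (Tyy : ℂ) • PauliY ∧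
      Φ PauliZ = (Tzz : ℂ) • PauliZ) → IsCPDNN ⇑Φ := by
    rintro ⟨Txx, Tyy, Tzz, hT, -, hX, hY, hZ⟩ k X hXd
    obtain ⟨hT1, hT2⟩ := abs_le.mp hT
    obtain ⟨hc3, hc4⟩ := constraints Φ hCP Txx Tyy Tzz hU hX hY hZ
    refine ⟨hCP k X hXd.1, ?_⟩
    rintro ⟨a,i⟩ ⟨b,j⟩
    show 0 ≤ Φ (Matrix.of fun i' j' => X (a,i') (b,j')) i j
    rw [phi_apply Φ Txx Tyy Tzz hU hX hY hZ]
    have hr : (0:ℂ) ≤ (((1+Tzz)/2 : ℝ) : ℂ) := Complex.zero_le_real.mpr (by linarith)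
    have hs : (0:ℂ) ≤ (((1-Tzz)/2 : ℝ) : ℂ) := Complex.zero_le_real.mpr (by linarith)
    have hp : (0:ℂ) ≤ (((Txx+Tyy)/2 : ℝ) : ℂ) := Complex.zero_le_real.mpr (by linarith)
    have hq : (0:ℂ) ≤ (((Txx-Tyy)/2 : ℝ) : ℂ) := Complex.zero_le_real.mpr (by linarith)
    fin_cases i <;> fin_cases j <;>
      (simp only [Matrix.cons_val_zero, Matrix.cons_val_one, Matrix.head_cons,
        Matrix.cons_val', Matrix.empty_val', Matrix.cons_val_fin_one,
        Matrix.of_apply, Fin.isValue]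
       first
        | exact add_nonneg (mul_nonneg hr (hXd.2 _ _)) (mul_nonneg hs (hXd.2 _ _))
        | exact add_nonneg (mul_nonneg hs (hXd.2 _ _)) (mul_nonneg hr (hXd.2 _ _))
        | exact add_nonneg (mul_nonneg hp (hXd.2 _ _)) (mul_nonneg hq (hXd.2 _ _))
        | exact add_nonneg (mul_nonneg hq (hXd.2 _ _)) (mul_nonneg hp (hXd.2 _ _)))
  exact ⟨⟨fun h => hTtoCPDNN (hCPtoT h), fun h => hTtoCPCP (hDNNtoT h)⟩,
    ⟨hCPtoT, hTtoCPCP⟩⟩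

end CPCPPaper
end

section
/- For every qubit density matrix ρ ∈ M_2 there exists a CP-preserving quantum channel Φ : M_2 → M_2 such that Φ(σ) = ρ, where σ = (I + Y)/2 and Y is the Pauli matrix [[0,−i],[i,0]]. -/
open Matrix BigOperators
open scoped ComplexOrder

namespace CPCPPaper

/-! ### Auxiliary lemmas for Statement 12 -/

section Aux

lemma aux_one_sub_posSemidef (ρ : Matrix (Fin 2) (Fin 2) ℂ) (hρ : ρ.PosSemidef)
    (htr : ρ.trace = 1) : (1 - ρ).PosSemidef := by
  rw [Matrix.posSemidef_iff_dotProduct_mulVec]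
  constructor
  · have := hρ.isHermitian
    simp [Matrix.IsHermitian, Matrix.conjTranspose_sub, this.eq]
  · intro x
    have key : star x ⬝ᵥ ((1 - ρ) *ᵥ x)
        = star ![star (x 1), -star (x 0)] ⬝ᵥ (ρ *ᵥ ![star (x 1), -star (x 0)]) := by
      have h1 : ρ 0 0 + ρ 1 1 = 1 := by
        simpa [Matrix.trace_fin_two] using htr
      simp only [dotProduct, Matrix.mulVec, Fin.sum_univ_two, Matrix.sub_apply,
        Matrix.one_apply, Pi.star_apply, Matrix.cons_val_zero, Matrix.cons_val_one,
        Matrix.head_cons, star_star, star_neg]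
      simp only [← starRingEnd_apply]
      ring_nf
      simp [Matrix.one_apply]
      linear_combination (-1 : ℂ) * ((starRingEnd ℂ) (x 0) * x 0
        + (starRingEnd ℂ) (x 1) * x 1) * h1
    rw [key]
    exact hρ.dotProduct_mulVec_nonneg _

set_option maxHeartbeats 1000000 in
lemma aux_isCPMap_of_kraus {n m : ℕ} {ι : Type} [Fintype ι]
    (Φ : Matrix (Fin n) (Fin n) ℂ → Matrix (Fin m) (Fin m) ℂ)
    (A : ι → Matrix (Fin m) (Fin n) ℂ)
    (hΦ : ∀ X, Φ X = ∑ a, A a * X * (A a)ᴴ) : IsCPMap Φ := by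
  intro k X hX
  have key : tensorExt k Φ X
      = ∑ a, (Matrix.of fun (p : Fin k × Fin m) (q : Fin k × Fin n) =>
          if p.1 = q.1 then A a p.2 q.2 else 0) * X *
        (Matrix.of fun (p : Fin k × Fin m) (q : Fin k × Fin n) =>
          if p.1 = q.1 then A a p.2 q.2 else 0)ᴴ := by
    ext ⟨p1, p2⟩ ⟨q1, q2⟩
    rw [Matrix.sum_apply]
    simp only [tensorExt, Matrix.of_apply, hΦ, Matrix.sum_apply, Matrix.mul_apply,
      Matrix.conjTranspose_apply, Fintype.sum_prod_type, Matrix.of_apply]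
    refine Finset.sum_congr rfl fun a _ => ?_
    rw [Finset.sum_comm]
    simp only [ite_mul, mul_ite, zero_mul, mul_zero, apply_ite (star : ℂ → ℂ), star_zero,
      Finset.sum_ite_eq, Finset.mem_univ, if_true]
    refine Finset.sum_congr rfl fun x _ => ?_
    congr 1
    rw [Finset.sum_comm]
    simp
  rw [key]
  apply Finset.sum_induction _ _ (fun a b ha hb => ha.add hb) Matrix.PosSemidef.zero
  intro a _
  exact hX.mul_mul_conjTranspose_same _

/-- The channel used for Statement 12. -/
noncomputable def auxPhi (ρ : Matrix (Fin 2) (Fin 2) ℂ) :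
    Matrix (Fin 2) (Fin 2) ℂ →ₗ[ℂ] Matrix (Fin 2) (Fin 2) ℂ where
  toFun X := (2⁻¹ * (X.trace + (X * PauliY).trace)) • ρ
    + (2⁻¹ * (X.trace - (X * PauliY).trace)) • (1 - ρ)
  map_add' X Y := by
    simp only [Matrix.add_mul, Matrix.trace_add]
    module
  map_smul' c X := by
    simp only [Matrix.smul_mul, Matrix.trace_smul, smul_eq_mul, RingHom.id_apply]
    module

lemma aux_sandwich (u w : Fin 2 → ℂ) (X : Matrix (Fin 2) (Fin 2) ℂ) :
    (Matrix.vecMulVec u w) * X * (Matrix.vecMulVec u w)ᴴ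
      = (∑ p, ∑ q, w p * X p q * star (w q)) • Matrix.vecMulVec u (star u) := by
  ext i j
  simp only [Matrix.mul_apply, Matrix.vecMulVec_apply, Matrix.conjTranspose_apply,
    Matrix.smul_apply, Fin.sum_univ_two, Pi.star_apply, star_mul', smul_eq_mul]
  ring

lemma aux_cols (S : Matrix (Fin 2) (Fin 2) ℂ) :
    ∑ a : Fin 2, Matrix.vecMulVec (fun i => S i a) (star fun j => S j a) = S * Sᴴ := by
  ext i j
  simp only [Matrix.sum_apply, Matrix.vecMulVec_apply, Matrix.mul_apply,
    Matrix.conjTranspose_apply, Fin.sum_univ_two, Pi.star_apply]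

lemma aux_tminus (X : Matrix (Fin 2) (Fin 2) ℂ) :
    (∑ p, ∑ q, (![1, -Complex.I] : Fin 2 → ℂ) p * X p q * star ((![1, -Complex.I] : Fin 2 → ℂ) q))
      = X.trace + (X * PauliY).trace := by
  simp [Matrix.trace_fin_two, Matrix.mul_apply, Fin.sum_univ_two, PauliY,
    Complex.ext_iff]
  constructor <;> ring

lemma aux_tplus (X : Matrix (Fin 2) (Fin 2) ℂ) :
    (∑ p, ∑ q, (![1, Complex.I] : Fin 2 → ℂ) p * X p q * star ((![1, Complex.I] : Fin 2 → ℂ) q))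
      = X.trace - (X * PauliY).trace := by
  simp [Matrix.trace_fin_two, Matrix.mul_apply, Fin.sum_univ_two, PauliY,
    Complex.ext_iff]
  constructor <;> ring

end Aux

/-- Every qubit density matrix is the image of `σ = (I + Y)/2` under
some CP-preserving qubit quantum channel. -/
theorem statement_12 (ρ : Matrix (Fin 2) (Fin 2) ℂ)
    (hρ : ρ.PosSemidef) (htr : ρ.trace = 1) :
    ∃ Φ : Matrix (Fin 2) (Fin 2) ℂ →ₗ[ℂ] Matrix (Fin 2) (Fin 2) ℂ,
      IsCPMap ⇑Φ ∧ IsTracePreserving ⇑Φ ∧ IsCPPreserving ⇑Φ ∧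
      Φ ((2 : ℂ)⁻¹ • (1 + PauliY)) = ρ := by
  have h1psd := aux_one_sub_posSemidef ρ hρ htr
  obtain ⟨S, hS2⟩ : ∃ S : Matrix (Fin 2) (Fin 2) ℂ, S * Sᴴ = ρ := by
    open scoped MatrixOrder in
    exact ⟨CFC.sqrt ρ, by
      rw [(Matrix.nonneg_iff_posSemidef.mp (CFC.sqrt_nonneg ρ)).1.eq]
      exact CFC.sqrt_mul_sqrt_self ρ (Matrix.nonneg_iff_posSemidef.mpr hρ)⟩
  obtain ⟨T, hT2⟩ : ∃ T : Matrix (Fin 2) (Fin 2) ℂ, T * Tᴴ = 1 - ρ := by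
    open scoped MatrixOrder in
    exact ⟨CFC.sqrt (1 - ρ), by
      rw [(Matrix.nonneg_iff_posSemidef.mp (CFC.sqrt_nonneg (1 - ρ))).1.eq]
      exact CFC.sqrt_mul_sqrt_self (1 - ρ) (Matrix.nonneg_iff_posSemidef.mpr h1psd)⟩
  set c : ℂ := (((Real.sqrt 2)⁻¹ : ℝ) : ℂ) with hcdef
  have hr : ((Real.sqrt 2)⁻¹ : ℝ) * (Real.sqrt 2)⁻¹ = 2⁻¹ := by
    rw [← mul_inv, Real.mul_self_sqrt (by norm_num)]
  have hc : c * star c = 2⁻¹ := by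
    rw [hcdef, Complex.star_def, Complex.conj_ofReal, ← Complex.ofReal_mul, hr]
    norm_num
  refine ⟨auxPhi ρ, ?_, ?_, ?_, ?_⟩
  · -- IsCPMap
    apply aux_isCPMap_of_kraus _ (Sum.elim
      (fun a : Fin 2 => c • Matrix.vecMulVec (fun i => S i a) ![1, -Complex.I])
      (fun a : Fin 2 => c • Matrix.vecMulVec (fun i => T i a) ![1, Complex.I]))
    intro X
    have key : ∀ (u w : Fin 2 → ℂ),
        (c • Matrix.vecMulVec u w) * X * (c • Matrix.vecMulVec u w)ᴴ
          = (c * star c * (∑ p, ∑ q, w p * X p q * star (w q)))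
              • Matrix.vecMulVec u (star u) := by
      intro u w
      rw [Matrix.conjTranspose_smul, Matrix.smul_mul, Matrix.smul_mul, Matrix.mul_smul,
        aux_sandwich, smul_smul, smul_smul]
    show (2⁻¹ * (X.trace + (X * PauliY).trace)) • ρ
        + (2⁻¹ * (X.trace - (X * PauliY).trace)) • (1 - ρ) = _
    rw [Fintype.sum_sum_type]
    simp only [Sum.elim_inl, Sum.elim_inr, key, aux_tminus, aux_tplus, ← Finset.smul_sum,
      aux_cols, hS2, hT2, hc]
  · -- trace preserving
    intro X
    show ((2⁻¹ * (X.trace + (X * PauliY).trace)) • ρ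
        + (2⁻¹ * (X.trace - (X * PauliY).trace)) • (1 - ρ)).trace = X.trace
    rw [Matrix.trace_add, Matrix.trace_smul, Matrix.trace_smul, Matrix.trace_sub,
      Matrix.trace_one, htr]
    simp only [smul_eq_mul]
    norm_num
    ring
  · -- CP preserving
    rintro ρ' ⟨⟨k, v, hv, hsum⟩, htr'⟩
    have h01 : ρ' 0 1 = ρ' 1 0 := by
      rw [hsum]
      simp only [Matrix.sum_apply, Matrix.vecMulVec_apply]
      exact Finset.sum_congr rfl fun j _ => mul_comm _ _
    have hYtr : (ρ' * PauliY).trace = 0 := by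
      simp [Matrix.trace_fin_two, Matrix.mul_apply, Fin.sum_univ_two, PauliY, h01]
      try ring
    have hval : auxPhi ρ ρ' = (2 : ℂ)⁻¹ • 1 := by
      show (2⁻¹ * (ρ'.trace + (ρ' * PauliY).trace)) • ρ
          + (2⁻¹ * (ρ'.trace - (ρ' * PauliY).trace)) • (1 - ρ) = _
      rw [hYtr, htr']
      module
    rw [hval]
    constructor
    · refine ⟨2, fun j i => if j.val = i.val then (((Real.sqrt 2)⁻¹ : ℝ) : ℂ) else 0,
        fun j i => ?_, ?_⟩
      · dsimp only
        split
        · rw [Complex.zero_le_real]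
          positivity
        · exact le_refl 0
      · ext i j
        simp only [Matrix.sum_apply, Matrix.vecMulVec_apply, Fin.sum_univ_two,
          Matrix.smul_apply, Matrix.one_apply, smul_eq_mul]
        fin_cases i <;> fin_cases j <;>
          norm_num [← Complex.ofReal_inv, ← Complex.ofReal_mul, hr]
    · rw [Matrix.trace_smul, Matrix.trace_one]
      norm_num
  · -- image of sigma
    have h1 : ((2 : ℂ)⁻¹ • (1 + PauliY) : Matrix (Fin 2) (Fin 2) ℂ).trace = 1 := by
      simp [Matrix.trace_fin_two, PauliY, Matrix.one_apply]
      try norm_num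
    have h2 : (((2 : ℂ)⁻¹ • (1 + PauliY) : Matrix (Fin 2) (Fin 2) ℂ) * PauliY).trace = 1 := by
      simp [Matrix.smul_mul, Matrix.trace_fin_two, Matrix.mul_apply, Fin.sum_univ_two,
        PauliY, Matrix.one_apply, Matrix.add_apply]
      norm_num [Complex.ext_iff]
    show (2⁻¹ * (((2 : ℂ)⁻¹ • (1 + PauliY) : Matrix (Fin 2) (Fin 2) ℂ).trace
          + (((2 : ℂ)⁻¹ • (1 + PauliY) : Matrix (Fin 2) (Fin 2) ℂ) * PauliY).trace)) • ρ
        + (2⁻¹ * (((2 : ℂ)⁻¹ • (1 + PauliY) : Matrix (Fin 2) (Fin 2) ℂ).trace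
          - (((2 : ℂ)⁻¹ • (1 + PauliY) : Matrix (Fin 2) (Fin 2) ℂ) * PauliY).trace)) • (1 - ρ) = ρ
    rw [h1, h2]
    norm_num
end CPCPPaper
end

section
/- If |v⟩ ∈ C^n is a unit vector then its 1-norm of non-negativity satisfies ‖|v⟩‖_1^N ≤ min{√n, 2}. -/
open Matrix BigOperators
open scoped ComplexOrder

namespace CPCPPaper

/-- The 1-norm of non-negativity of a complex vector. -/
noncomputable def nnNorm1 {n : ℕ} (v : Fin n → ℂ) : ℝ :=
  sInf {s : ℝ | ∃ (k : ℕ) (c : Fin k → ℂ) (w : Fin k → Fin n → ℂ),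
    (∀ j, ‖c j‖ = 1) ∧ (∀ j i, 0 ≤ w j i) ∧ (v = ∑ j, c j • w j) ∧
    s = ∑ j, Real.sqrt (∑ i, Complex.normSq (w j i))}

/-- For a unit vector `v ∈ ℂⁿ`, `‖v‖₁ᴺ ≤ min {√n, 2}`. -/
theorem statement_14 {n : ℕ} (v : Fin n → ℂ)
    (hv : ∑ i, Complex.normSq (v i) = 1) :
    nnNorm1 v ≤ min (Real.sqrt n) 2 := by
  have hbdd : BddBelow {s : ℝ | ∃ (k : ℕ) (c : Fin k → ℂ) (w : Fin k → Fin n → ℂ),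
      (∀ j, ‖c j‖ = 1) ∧ (∀ j i, 0 ≤ w j i) ∧ (v = ∑ j, c j • w j) ∧
      s = ∑ j, Real.sqrt (∑ i, Complex.normSq (w j i))} := by
    refine ⟨0, ?_⟩
    rintro s ⟨k, c, w, _, _, _, rfl⟩
    positivity
  refine le_min ?_ ?_
  · -- coordinate decomposition
    have hmem : (∑ j, ‖v j‖) ∈ {s : ℝ | ∃ (k : ℕ) (c : Fin k → ℂ) (w : Fin k → Fin n → ℂ),
        (∀ j, ‖c j‖ = 1) ∧ (∀ j i, 0 ≤ w j i) ∧ (v = ∑ j, c j • w j) ∧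
        s = ∑ j, Real.sqrt (∑ i, Complex.normSq (w j i))} := by
      refine ⟨n, fun j => if v j = 0 then 1 else v j / ‖v j‖,
        fun j i => ((if i = j then ‖v j‖ else 0 : ℝ) : ℂ), ?_, ?_, ?_, ?_⟩
      · intro j
        by_cases h : v j = 0
        · simp [h]
        · simp [h, norm_div, norm_norm, div_self (norm_ne_zero_iff.mpr h)]
      · intro j i
        rw [Complex.zero_le_real]
        split <;> simp [norm_nonneg]
      · funext i
        rw [Finset.sum_apply]
        rw [Finset.sum_eq_single i]
        · by_cases h : v i = 0
          · simp [h]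
          · have hn : (‖v i‖ : ℂ) ≠ 0 := by exact_mod_cast norm_ne_zero_iff.mpr h
            simp [h, div_mul_cancel₀ _ hn]
        · intro j _ hj
          simp [Ne.symm hj]
        · simp
      · refine Finset.sum_congr rfl fun j _ => ?_
        rw [Finset.sum_eq_single j]
        · simp [Complex.normSq_apply, Real.sqrt_sq (norm_nonneg _), ← sq]
        · intro i _ hi; simp [hi]
        · simp
    refine le_trans (csInf_le hbdd hmem) ?_
    have h1 : (∑ j, ‖v j‖) ^ 2 ≤ (n : ℝ) := by
      have := sq_sum_le_card_mul_sum_sq (s := Finset.univ) (f := fun j => ‖v j‖)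
      simp only [Finset.card_univ, Fintype.card_fin] at this
      calc (∑ j, ‖v j‖) ^ 2 ≤ (n : ℝ) * ∑ j, ‖v j‖ ^ 2 := this
        _ = n := by
          rw [show (∑ j, ‖v j‖ ^ 2) = ∑ j, Complex.normSq (v j) from
            Finset.sum_congr rfl fun j _ => (Complex.normSq_eq_norm_sq (v j)).symm, hv, mul_one]
    exact (Real.le_sqrt (by positivity) (by positivity)).mpr h1
  · -- four-part decomposition
    have key : ∀ x : ℝ, (max x 0) ^ 2 + (max (-x) 0) ^ 2 = x ^ 2 := by
      intro x
      rcases le_total x 0 with h | h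
      · rw [max_eq_right h, max_eq_left (by linarith)]; ring
      · rw [max_eq_left h, max_eq_right (by linarith)]; ring
    set a := ∑ i, (max (v i).re 0) ^ 2 with ha
    set b := ∑ i, (max (-(v i).re) 0) ^ 2 with hb
    set c := ∑ i, (max (v i).im 0) ^ 2 with hc
    set d := ∑ i, (max (-(v i).im) 0) ^ 2 with hd
    have habcd : a + b + c + d = 1 := by
      rw [ha, hb, hc, hd, ← Finset.sum_add_distrib, ← Finset.sum_add_distrib,
        ← Finset.sum_add_distrib, ← hv]
      refine Finset.sum_congr rfl fun i _ => ?_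
      rw [Complex.normSq_apply]
      have h1 := key (v i).re
      have h2 := key (v i).im
      ring_nf
      ring_nf at h1 h2
      nlinarith [h1, h2]
    have hmem : (Real.sqrt a + Real.sqrt b + Real.sqrt c + Real.sqrt d) ∈
        {s : ℝ | ∃ (k : ℕ) (c : Fin k → ℂ) (w : Fin k → Fin n → ℂ),
        (∀ j, ‖c j‖ = 1) ∧ (∀ j i, 0 ≤ w j i) ∧ (v = ∑ j, c j • w j) ∧
        s = ∑ j, Real.sqrt (∑ i, Complex.normSq (w j i))} := by
      refine ⟨4, ![1, -1, Complex.I, -Complex.I],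
        ![fun i => ((max (v i).re 0 : ℝ) : ℂ), fun i => ((max (-(v i).re) 0 : ℝ) : ℂ),
          fun i => ((max (v i).im 0 : ℝ) : ℂ), fun i => ((max (-(v i).im) 0 : ℝ) : ℂ)],
        ?_, ?_, ?_, ?_⟩
      · intro j
        fin_cases j <;> simp
      · intro j i
        fin_cases j <;> exact Complex.zero_le_real.mpr (le_max_right _ _)
      · funext i
        rw [Finset.sum_apply, Fin.sum_univ_four]
        simp only [Matrix.cons_val_zero, Matrix.cons_val_one, Matrix.head_cons,
          Matrix.cons_val_two, Matrix.tail_cons, Matrix.cons_val_three, Pi.smul_apply,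
          smul_eq_mul]
        refine Complex.ext ?_ ?_
        · simp only [Complex.add_re, Complex.mul_re, Complex.one_re, Complex.one_im,
            Complex.neg_re, Complex.neg_im, Complex.I_re, Complex.I_im,
            Complex.ofReal_re, Complex.ofReal_im]
          ring_nf
          try linarith [max_zero_sub_max_neg_zero_eq_self (v i).re]
        · simp only [Complex.add_im, Complex.mul_im, Complex.one_re, Complex.one_im,
            Complex.neg_re, Complex.neg_im, Complex.I_re, Complex.I_im,
            Complex.ofReal_re, Complex.ofReal_im]
          ring_nf
          try linarith [max_zero_sub_max_neg_zero_eq_self (v i).im]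
      · rw [Fin.sum_univ_four]
        have hsq : ∀ r : ℝ, Complex.normSq (r : ℂ) = r ^ 2 := by
          intro r; simp [Complex.normSq_apply]; ring
        simp only [Matrix.cons_val_zero, Matrix.cons_val_one, Matrix.head_cons,
          Matrix.cons_val_two, Matrix.tail_cons, Matrix.cons_val_three, hsq]
        try rw [ha, hb, hc, hd]
    refine le_trans (csInf_le hbdd hmem) ?_
    have ha0 : 0 ≤ a := Finset.sum_nonneg fun i _ => sq_nonneg _
    have hb0 : 0 ≤ b := Finset.sum_nonneg fun i _ => sq_nonneg _
    have hc0 : 0 ≤ c := Finset.sum_nonneg fun i _ => sq_nonneg _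
    have hd0 : 0 ≤ d := Finset.sum_nonneg fun i _ => sq_nonneg _
    have sa := Real.sq_sqrt ha0
    have sb := Real.sq_sqrt hb0
    have sc := Real.sq_sqrt hc0
    have sd := Real.sq_sqrt hd0
    have na := Real.sqrt_nonneg a
    have nb := Real.sqrt_nonneg b
    have nc := Real.sqrt_nonneg c
    have nd := Real.sqrt_nonneg d
    have hstep : ∀ x : ℝ, 0 ≤ x → Real.sqrt x ≤ x + 1 / 4 := by
      intro x hx
      nlinarith [Real.sq_sqrt hx, Real.sqrt_nonneg x, sq_nonneg (Real.sqrt x - 1 / 2)]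
    linarith [hstep a ha0, hstep b hb0, hstep c hc0, hstep d hd0]
end CPCPPaper
end
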